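/- arXiv:1912.05498 — 11 statements merged into one kernel-verified Lean document; each statement's English description precedes it below -/
import Mathlib

section
/- For each k ∈ {0,1,...,N}, the CDF of the Cantor measure satisfies F(k/N) = g(k)/|D|, where g(k) is the number of elements of D strictly less than k. -/
/-!
Evaluating the self-similarity equation `μ = |D|⁻¹ ∑_{d ∈ D} (φ_d)_* μ` on `[0, k/N]` reduces
everything to the pulled-back intervals `φ_d⁻¹ [0, k/N] = [-d, k - d]`. Since `μ` lives on `[0, 1]`,
such an interval has full mass when `d < k`, mass `μ {0}` when `d = k` and mass `0` when `d > k`.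
For `k = 0` this gives `μ {0} ≤ |D|⁻¹ μ {0}`, so `|D| ≥ 2` rules out an atom at `0`, and then
`μ [0, k/N] = #{d ∈ D | d < k} / |D|`.
-/

open MeasureTheory Set
open scoped ENNReal

namespace CantorMeasure

/-- The map `φ_d` of the iterated function system. -/
noncomputable def digitMap (N d : ℕ) : ℝ → ℝ := fun x => (x + d) / N

lemma measurable_digitMap (N d : ℕ) : Measurable (digitMap N d) :=
  (measurable_id.add_const _).div_const _

lemma preimage_digitMap_Icc {N : ℕ} (hN : 0 < N) (d : ℕ) (a b : ℝ) :
    digitMap N d ⁻¹' Icc a b = Icc (N * a - d) (N * b - d) := by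
  have hN' : (0 : ℝ) < N := Nat.cast_pos.mpr hN
  ext x
  simp only [digitMap, mem_preimage, mem_Icc, le_div_iff₀ hN', div_le_iff₀ hN']
  constructor <;> rintro ⟨h₁, h₂⟩ <;> constructor <;> linarith

section UnitIntervalSupport

variable {μ : Measure ℝ} [IsProbabilityMeasure μ]

lemma measure_Icc_eq_one_of_le (hsupp : μ (Icc 0 1) = 1) {a b : ℝ} (ha : a ≤ 0) (hb : 1 ≤ b) :
    μ (Icc a b) = 1 :=
  le_antisymm prob_le_one (hsupp ▸ measure_mono (Icc_subset_Icc ha hb))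

lemma measure_Icc_eq_zero_of_neg (hsupp : μ (Icc 0 1) = 1) {a b : ℝ} (hb : b < 0) :
    μ (Icc a b) = 0 := by
  refine measure_mono_null ?_ ((prob_compl_eq_zero_iff measurableSet_Icc).mpr hsupp)
  exact fun x hx hx' => (hb.trans_le (hx'.1.trans hx.2)).false

lemma measure_Icc_zero_right (hsupp : μ (Icc 0 1) = 1) {a : ℝ} (ha : a ≤ 0) :
    μ (Icc a 0) = μ {0} := by
  rw [← measure_inter_conull ((prob_compl_eq_zero_iff measurableSet_Icc).mpr hsupp),
    Icc_inter_Icc, sup_of_le_right ha, inf_of_le_left zero_le_one, Icc_self]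

end UnitIntervalSupport

variable {N : ℕ} {D : Finset ℕ} {μ : Measure ℝ}

lemma measure_eq_inv_card_mul_sum_preimage
    (hinv : μ = (D.card : ℝ≥0∞)⁻¹ • ∑ d ∈ D, μ.map (digitMap N d))
    {s : Set ℝ} (hs : MeasurableSet s) :
    μ s = (D.card : ℝ≥0∞)⁻¹ * ∑ d ∈ D, μ (digitMap N d ⁻¹' s) := by
  conv_lhs => rw [hinv]
  simp only [Measure.smul_apply, Measure.coe_finsetSum, Finset.sum_apply, smul_eq_mul,
    Measure.map_apply (measurable_digitMap N _) hs]

lemma measure_preimage_digitMap_Icc [IsProbabilityMeasure μ] (hsupp : μ (Icc 0 1) = 1)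
    (hN : 0 < N) (d k : ℕ) :
    μ (digitMap N d ⁻¹' Icc 0 ((k : ℝ) / N)) =
      (if d < k then 1 else 0) + if d = k then μ {0} else 0 := by
  have hN' : (N : ℝ) ≠ 0 := Nat.cast_ne_zero.mpr hN.ne'
  rw [preimage_digitMap_Icc hN, mul_zero, zero_sub, mul_div_cancel₀ _ hN']
  have hd : -(d : ℝ) ≤ 0 := neg_nonpos.mpr d.cast_nonneg
  rcases lt_trichotomy d k with hdk | rfl | hdk
  · have hdk' : (d : ℝ) + 1 ≤ k := by exact_mod_cast hdk
    rw [if_pos hdk, if_neg hdk.ne, add_zero]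
    exact measure_Icc_eq_one_of_le hsupp hd (by linarith)
  · rw [if_neg (lt_irrefl d), if_pos rfl, zero_add, sub_self]
    exact measure_Icc_zero_right hsupp hd
  · have hdk' : (k : ℝ) < d := by exact_mod_cast hdk
    rw [if_neg hdk.not_gt, if_neg hdk.ne', add_zero]
    exact measure_Icc_eq_zero_of_neg hsupp (by linarith)

lemma measure_Icc_zero_natCast_div [IsProbabilityMeasure μ] (hsupp : μ (Icc 0 1) = 1)
    (hinv : μ = (D.card : ℝ≥0∞)⁻¹ • ∑ d ∈ D, μ.map (digitMap N d)) (hN : 0 < N) (k : ℕ) :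
    μ (Icc 0 ((k : ℝ) / N)) =
      (D.card : ℝ≥0∞)⁻¹ * ((D.filter (· < k)).card + if k ∈ D then μ {0} else 0) := by
  rw [measure_eq_inv_card_mul_sum_preimage hinv measurableSet_Icc]
  simp only [measure_preimage_digitMap_Icc hsupp hN, Finset.sum_add_distrib, Finset.sum_boole,
    Finset.sum_ite_eq']

lemma measure_singleton_zero_eq_zero [IsProbabilityMeasure μ] (hsupp : μ (Icc 0 1) = 1)
    (hinv : μ = (D.card : ℝ≥0∞)⁻¹ • ∑ d ∈ D, μ.map (digitMap N d)) (hN : 0 < N)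
    (hcard : 2 ≤ D.card) : μ {0} = 0 := by
  have hatom := measure_Icc_zero_natCast_div hsupp hinv hN 0
  simp only [Nat.cast_zero, zero_div, Icc_self, not_lt_zero, Finset.filter_false,
    Finset.card_empty, zero_add] at hatom
  have hle : μ {0} ≤ 2⁻¹ * μ {0} := calc
    μ {0} ≤ (D.card : ℝ≥0∞)⁻¹ * μ {0} := hatom.le.trans (by gcongr; split_ifs <;> simp)
    _ ≤ 2⁻¹ * μ {0} := by gcongr; exact_mod_cast hcard
  by_contra hne
  have hlt := ENNReal.half_lt_self hne (measure_ne_top μ _)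
  rw [ENNReal.div_eq_inv_mul] at hlt
  exact hlt.not_ge hle

end CantorMeasure

theorem cantor_cdf_at_k_div_N_general
    (N : ℕ) (hN : 3 ≤ N) (D : Finset ℕ)
    (hcard : 2 ≤ D.card)
    (μ : Measure ℝ) [IsProbabilityMeasure μ]
    (hsupp : μ (Set.Icc 0 1) = 1)
    (hinv : μ = (D.card : ℝ≥0∞)⁻¹ • ∑ d ∈ D, μ.map (fun x : ℝ => (x + (d : ℝ)) / N)) :
    ∀ k ≤ N,
      (μ (Set.Icc 0 ((k : ℝ) / N))).toReal
        = ((D.filter (fun d => d < k)).card : ℝ) / (D.card : ℝ) := by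
  intro k _
  have hN0 : 0 < N := by omega
  have hatom : μ {0} = 0 := CantorMeasure.measure_singleton_zero_eq_zero hsupp hinv hN0 hcard
  rw [CantorMeasure.measure_Icc_zero_natCast_div hsupp hinv hN0 k, hatom, ite_self, add_zero,
    ENNReal.toReal_mul, ENNReal.toReal_inv, ENNReal.toReal_natCast, ENNReal.toReal_natCast,
    inv_mul_eq_div]

theorem cantor_cdf_at_k_div_N
    (N : ℕ) (hN : 3 ≤ N) (D : Finset ℕ) (hD : D ⊆ Finset.range N)
    (hcard : 2 ≤ D.card) (hcard' : D.card ≤ N - 1)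
    (μ : Measure ℝ) [IsProbabilityMeasure μ]
    (hsupp : μ (Set.Icc 0 1) = 1)
    (hinv : μ = (D.card : ℝ≥0∞)⁻¹ • ∑ d ∈ D, μ.map (fun x : ℝ => (x + (d : ℝ)) / N)) :
    ∀ k ≤ N,
      (μ (Set.Icc 0 ((k : ℝ) / N))).toReal
        = ((D.filter (fun d => d < k)).card : ℝ) / (D.card : ℝ) :=
  cantor_cdf_at_k_div_N_general N hN D hcard μ hsupp hinv
end

section
/- The cumulative digit function of a Kronecker product satisfies: for j ∈ {0,...,N} and k ∈ {0,...,M}, g_{B⊗C}(k·N + j) = ‖C‖·g_B(k) + b_k·g_C(j). -/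
lemma kron_partial (N : ℕ) (b c : ℕ → ℕ) (k j : ℕ) (hj : j ≤ N) :
    (∑ i ∈ Finset.Ico (k * N) (k * N + j), b (i / N) * c (i % N))
      = b k * ∑ t ∈ Finset.range j, c t := by
  rcases Nat.eq_zero_or_pos j with rfl | hjpos
  · simp
  have hN : 0 < N := lt_of_lt_of_le hjpos hj
  rw [Finset.mul_sum, Finset.sum_Ico_eq_sum_range]
  simp only [Nat.add_sub_cancel_left]
  apply Finset.sum_congr rfl
  intro i hi
  have hi' : i < N := lt_of_lt_of_le (Finset.mem_range.mp hi) hj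
  rw [mul_comm k N, Nat.mul_add_div hN, Nat.mul_add_mod, Nat.div_eq_of_lt hi', Nat.mod_eq_of_lt hi']
  simp

lemma kron_blocks (N : ℕ) (b c : ℕ → ℕ) (k : ℕ) :
    (∑ i ∈ Finset.range (k * N), b (i / N) * c (i % N))
      = (∑ i ∈ Finset.range N, c i) * (∑ i ∈ Finset.range k, b i) := by
  induction k with
  | zero => simp
  | succ k ih =>
    have h : (k + 1) * N = k * N + N := by ring
    rw [h, ← Finset.sum_range_add_sum_Ico _ (Nat.le_add_right (k*N) N), ih,
      kron_partial N b c k N le_rfl, Finset.sum_range_succ]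
    ring

theorem kron_cumulative_digit_function
    (M N : ℕ) (b c : ℕ → ℕ) (hb : ∀ i, b i ≤ 1) (hc : ∀ i, c i ≤ 1) :
    ∀ j ≤ N, ∀ k ≤ M, k * N + j ≤ M * N →
      -- g_{B⊗C}(kN + j) = ‖C‖ · g_B(k) + b_k · g_C(j)
      (∑ i ∈ Finset.range (k * N + j), b (i / N) * c (i % N))
        = (∑ i ∈ Finset.range N, c i) * (∑ i ∈ Finset.range k, b i)
          + b k * (∑ i ∈ Finset.range j, c i) := by
  intro j hj k _ _
  rw [← Finset.sum_range_add_sum_Ico _ (Nat.le_add_right (k*N) j),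
    kron_blocks, kron_partial N b c k j hj]
end

section
/- The CDF of a Cantor measure is invariant under Kronecker powers of the digit vector: F_{B} = F_{B^{⊗k}} for all positive integers k, where B^{⊗k} denotes the k-fold Kronecker product of B with itself (a digit vector for scale factor N^k). -/
open MeasureTheory Set
open scoped ENNReal

/-- The `k`-fold Kronecker power of a digit set `D` with scale factor `N`:
`kronPow N D 0 = {0}` and `kronPow N D (k+1) = (kronPow N D k) ⊗ D`,
so that `kronPow N D 1 = D`. -/
def kronPow (N : ℕ) (D : Finset ℕ) : ℕ → Finset ℕ
  | 0 => {0}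
  | k + 1 => Finset.image (fun p : ℕ × ℕ => p.2 + p.1 * N) ((kronPow N D k) ×ˢ D)

/-!
Iterating the invariance equation of `μ` `k` times shows that `μ` is also invariant for the
digit set `D^{⊗k}` with scale `N^k`, because the composite maps
`x ↦ ((x + d) / N + e) / N^k` are exactly `x ↦ (x + d + e N) / N^{k+1}` and the digits
`d + e N` are distinct. So `μ` and `ν` are invariant measures of the same IFS. For maps
`x ↦ (x + e) / M` with `M > 1` such a probability measure is unique: its characteristic function
satisfies `φ t = m(t) φ (t / M)` with `m` an average of unimodular numbers, so the difference `ψ`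
of two of them obeys `‖ψ t‖ ≤ ‖ψ (t / M^n)‖ → ‖ψ 0‖ = 0`.
-/

noncomputable def hutchinson (M : ℕ) (E : Finset ℕ) (μ : Measure ℝ) : Measure ℝ :=
  (E.card : ℝ≥0∞)⁻¹ • ∑ e ∈ E, μ.map (fun x : ℝ => (x + (e : ℝ)) / M)

lemma injOn_snd_add_fst_mul {N : ℕ} {D : Finset ℕ} (hD : D ⊆ Finset.range N) (K : Finset ℕ) :
    Set.InjOn (fun p : ℕ × ℕ => p.2 + p.1 * N) ↑(K ×ˢ D) := by
  rintro ⟨e, d⟩ hp ⟨e', d'⟩ hq h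
  simp only [Finset.coe_product, Set.mem_prod, Finset.mem_coe] at hp hq h
  have hd := Finset.mem_range.1 (hD hp.2)
  have hd' := Finset.mem_range.1 (hD hq.2)
  have hN : 0 < N := by omega
  have he : e = e' := by
    simpa [Nat.add_mul_div_right _ _ hN, Nat.div_eq_of_lt hd, Nat.div_eq_of_lt hd'] using
      congrArg (· / N) h
  subst he
  simp only [Prod.mk.injEq, true_and]
  omega

lemma hutchinson_hutchinson {N : ℕ} (hN : N ≠ 0) {D : Finset ℕ} (hD : D ⊆ Finset.range N)
    (M : ℕ) (E : Finset ℕ) (μ : Measure ℝ) :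
    hutchinson M E (hutchinson N D μ) =
      hutchinson (M * N) ((E ×ˢ D).image fun p => p.2 + p.1 * N) μ := by
  have hmeas (e c : ℕ) : Measurable fun x : ℝ => (x + (e : ℝ)) / c := by fun_prop
  have hcomp (e d : ℕ) : (fun x : ℝ => (x + (e : ℝ)) / M) ∘ (fun x : ℝ => (x + (d : ℝ)) / N)
      = fun x : ℝ => (x + ((d + e * N : ℕ) : ℝ)) / (M * N : ℕ) := by
    ext x
    simp only [Function.comp_apply]
    push_cast
    rw [div_add' _ _ _ (by exact_mod_cast hN), div_div, mul_comm (N : ℝ)]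
    ring
  simp only [hutchinson, Measure.map_smul, Measure.map_finset_sum (hmeas _ _).aemeasurable,
    Measure.map_map (hmeas _ _) (hmeas _ _), hcomp, Finset.smul_sum, smul_smul,
    Finset.sum_image (injOn_snd_add_fst_mul hD E), Finset.sum_product,
    Finset.card_image_of_injOn (injOn_snd_add_fst_mul hD E), Finset.card_product, Nat.cast_mul]
  rw [ENNReal.mul_inv (by simp) (by simp)]

lemma hutchinson_kronPow {N : ℕ} (hN : N ≠ 0) {D : Finset ℕ} (hD : D ⊆ Finset.range N)
    {μ : Measure ℝ} (hμ : μ = hutchinson N D μ) (k : ℕ) :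
    μ = hutchinson (N ^ k) (kronPow N D k) μ := by
  induction k with
  | zero => simp [hutchinson, kronPow]
  | succ k ih =>
    calc μ = hutchinson (N ^ k) (kronPow N D k) (hutchinson N D μ) := by rwa [← hμ]
      _ = hutchinson (N ^ (k + 1)) (kronPow N D (k + 1)) μ := by
        rw [hutchinson_hutchinson hN hD, pow_succ, kronPow]

lemma charFun_hutchinson (M : ℕ) (E : Finset ℕ) (μ : Measure ℝ) [IsFiniteMeasure μ] (t : ℝ) :
    charFun (hutchinson M E μ) t =
      ((E.card : ℂ)⁻¹ * ∑ e ∈ E, Complex.exp ((e * (t / M) : ℝ) * Complex.I)) *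
        charFun μ (t / M) := by
  have hmap (e : ℕ) : charFun (μ.map fun x : ℝ => (x + (e : ℝ)) / M) t =
      charFun μ (t / M) * Complex.exp ((e * (t / M) : ℝ) * Complex.I) := by
    have : (fun x : ℝ => (x + (e : ℝ)) / M) = fun x => (M : ℝ)⁻¹ * (x + e) := by
      ext x; ring
    rw [this, charFun_map_mul_comp (by fun_prop), charFun_map_add_const]
    simp only [div_eq_inv_mul, RCLike.inner_apply, conj_trivial]
    push_cast
    ring_nf
  have hint (e : ℕ) : Integrable (fun x : ℝ => Complex.exp (inner ℝ x t * Complex.I))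
      (μ.map fun x : ℝ => (x + (e : ℝ)) / M) :=
    Integrable.of_bound (by fun_prop) 1 (ae_of_all _ fun _ => (Complex.norm_exp_ofReal_mul_I _).le)
  rw [hutchinson, charFun_apply, integral_smul_measure,
    integral_finsetSum_measure fun e _ => hint e]
  simp only [← charFun_apply, hmap]
  rw [← Finset.mul_sum, ENNReal.toReal_inv, ENNReal.toReal_natCast, Complex.real_smul]
  push_cast
  ring

lemma eq_zero_of_norm_le_norm_div {F : Type*} [NormedAddCommGroup F] {ψ : ℝ → F}
    (hψ : ContinuousAt ψ 0) (hψ0 : ψ 0 = 0) {M : ℝ} (hM : 1 < M)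
    (hle : ∀ t, ‖ψ t‖ ≤ ‖ψ (t / M)‖) : ψ = 0 := by
  ext t
  have hiter : ∀ n : ℕ, ‖ψ t‖ ≤ ‖ψ (t / M ^ n)‖ := by
    intro n
    induction n with
    | zero => simp
    | succ n ih => exact ih.trans ((hle _).trans_eq (by rw [pow_succ, div_div]))
  have hshrink : Filter.Tendsto (fun n : ℕ => t / M ^ n) Filter.atTop (nhds 0) := by
    simpa [div_eq_mul_inv] using (tendsto_pow_atTop_nhds_zero_of_lt_one (by positivity)
      (inv_lt_one_of_one_lt₀ hM)).const_mul t
  have hlim : Filter.Tendsto (fun n : ℕ => ‖ψ (t / M ^ n)‖) Filter.atTop (nhds 0) := by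
    simpa [hψ0] using (hψ.tendsto.comp hshrink).norm
  simpa using ge_of_tendsto' hlim hiter

lemma norm_inv_card_mul_sum_exp_mul_I_le_one {ι : Type*} (s : Finset ι) (θ : ι → ℝ) :
    ‖(s.card : ℂ)⁻¹ * ∑ i ∈ s, Complex.exp (θ i * Complex.I)‖ ≤ 1 := by
  rw [norm_mul, norm_inv, Complex.norm_natCast]
  calc _ ≤ (s.card : ℝ)⁻¹ * ∑ i ∈ s, ‖Complex.exp (θ i * Complex.I)‖ := by
        gcongr; exact norm_sum_le _ _
    _ ≤ 1 := by
      simp only [Complex.norm_exp_ofReal_mul_I, Finset.sum_const, nsmul_eq_mul, mul_one]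
      exact inv_mul_le_one_of_le₀ le_rfl (Nat.cast_nonneg _)

lemma eq_of_hutchinson_eq_self {M : ℕ} (hM : 1 < M) (E : Finset ℕ) {μ ν : Measure ℝ}
    [IsProbabilityMeasure μ] [IsProbabilityMeasure ν]
    (hμ : μ = hutchinson M E μ) (hν : ν = hutchinson M E ν) : μ = ν := by
  refine Measure.ext_of_charFun (sub_eq_zero.1 ?_)
  refine eq_zero_of_norm_le_norm_div (M := M) (by fun_prop) (by simp) (by exact_mod_cast hM)
    fun t => ?_
  have hfactor : (charFun μ - charFun ν) t =
      ((E.card : ℂ)⁻¹ * ∑ e ∈ E, Complex.exp ((e * (t / M) : ℝ) * Complex.I)) *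
        (charFun μ - charFun ν) (t / M) := by
    conv_lhs => rw [Pi.sub_apply, hμ, hν, charFun_hutchinson, charFun_hutchinson]
    rw [Pi.sub_apply, mul_sub]
  rw [hfactor, norm_mul]
  exact mul_le_of_le_one_left (norm_nonneg _) (norm_inv_card_mul_sum_exp_mul_I_le_one _ _)

theorem cdf_kron_power_invariant_general
    (N : ℕ) (hN : 3 ≤ N) (D : Finset ℕ) (hD : D ⊆ Finset.range N)
    (k : ℕ) (hk : 1 ≤ k)
    (μ ν : Measure ℝ) [IsProbabilityMeasure μ] [IsProbabilityMeasure ν]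
    (hμinv : μ = (D.card : ℝ≥0∞)⁻¹ • ∑ d ∈ D, μ.map (fun x : ℝ => (x + (d : ℝ)) / N))
    (hνinv : ν = ((kronPow N D k).card : ℝ≥0∞)⁻¹ •
        ∑ d ∈ kronPow N D k, ν.map (fun x : ℝ => (x + (d : ℝ)) / (N ^ k : ℕ))) :
    ∀ x : ℝ, (μ (Set.Icc 0 x)).toReal = (ν (Set.Icc 0 x)).toReal := by
  have hμk : μ = hutchinson (N ^ k) (kronPow N D k) μ :=
    hutchinson_kronPow (by omega) hD hμinv k
  have hM : 1 < N ^ k := Nat.one_lt_pow (by omega) (by omega)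
  intro x
  rw [eq_of_hutchinson_eq_self hM _ hμk hνinv]

theorem cdf_kron_power_invariant
    (N : ℕ) (hN : 3 ≤ N) (D : Finset ℕ) (hD : D ⊆ Finset.range N)
    (hcard : 2 ≤ D.card) (hcard' : D.card ≤ N - 1)
    (k : ℕ) (hk : 1 ≤ k)
    (μ ν : Measure ℝ) [IsProbabilityMeasure μ] [IsProbabilityMeasure ν]
    (hμsupp : μ (Set.Icc 0 1) = 1)
    (hμinv : μ = (D.card : ℝ≥0∞)⁻¹ • ∑ d ∈ D, μ.map (fun x : ℝ => (x + (d : ℝ)) / N))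
    (hνsupp : ν (Set.Icc 0 1) = 1)
    (hνinv : ν = ((kronPow N D k).card : ℝ≥0∞)⁻¹ •
        ∑ d ∈ kronPow N D k, ν.map (fun x : ℝ => (x + (d : ℝ)) / (N ^ k : ℕ))) :
    ∀ x : ℝ, (μ (Set.Icc 0 x)).toReal = (ν (Set.Icc 0 x)).toReal :=
  cdf_kron_power_invariant_general N hN D hD k hk μ ν hμinv hνinv
end

section
/- For x ∈ (0,1) with base-N expansion x = Σ_{i=1}^∞ n_i/N^i (n_i ∈ {0,...,N-1}), the Cantor CDF satisfies F_B(x) = Σ_{i=1}^∞ (∏_{k=1}^{i-1} b_{n_k}) · g(n_i)/‖B‖^i, where g is the cumulative digit function of B. -/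
/-! Write `F y = μ [0, y]`. The copy of `μ` carried by the digit `d` lives on `[d/N, (d+1)/N]`, so
for `t ∈ [0, 1]` self-similarity gives
`F ((d₀ + t) / N) = (#{d ∈ D | d < d₀} + [d₀ ∈ D] F t) / |D|`,
provided `μ` has no atom at `0` (otherwise the copy with digit `d₀ + 1` would contribute at
`(d₀ + 1)/N`); an atom at `0` is excluded because only the digit `0` maps mass to `0`, which would
give `μ {0} ≤ μ {0} / |D|`. Applying this identity along the tails of the base-`N` expansion of `x`
and unrolling it `n` times leaves a remainder of size at most `|D|⁻ⁿ`. -/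

open MeasureTheory Set
open scoped ENNReal

theorem Real.ofDigits_eq_div {b : ℕ} (d : ℕ → Fin b) :
    Real.ofDigits d = ((d 0 : ℝ) + Real.ofDigits (fun i ↦ d (i + 1))) / b := by
  rw [Real.ofDigits_eq_sum_add_ofDigits d 1]
  simp [Real.ofDigitsTerm, div_eq_inv_mul]
  ring

theorem hasSum_of_eq_add_mul_div {u c e : ℕ → ℝ} {m C : ℝ} (hm : 1 < m)
    (hc : ∀ n, 0 ≤ c n) (he : ∀ n, e n ∈ Icc 0 1) (hu : ∀ n, |u n| ≤ C)
    (hrec : ∀ n, u n = (c n + e n * u (n + 1)) / m) :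
    HasSum (fun i ↦ (∏ k ∈ Finset.range i, e k) * (c i / m ^ (i + 1))) (u 0) := by
  have hm0 : 0 < m := zero_lt_one.trans hm
  have hprod : ∀ n, (∏ k ∈ Finset.range n, e k) ∈ Icc 0 1 := fun n ↦
    ⟨Finset.prod_nonneg fun k _ ↦ (he k).1,
      Finset.prod_le_one (fun k _ ↦ (he k).1) fun k _ ↦ (he k).2⟩
  have hpartial : ∀ n, u 0 =
      ∑ i ∈ Finset.range n, (∏ k ∈ Finset.range i, e k) * (c i / m ^ (i + 1)) +
        (∏ k ∈ Finset.range n, e k) / m ^ n * u n := by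
    intro n
    induction n with
    | zero => simp
    | succ n ih => rw [ih, Finset.sum_range_succ, Finset.prod_range_succ, hrec n]; ring
  have hrem : Filter.Tendsto (fun n ↦ (∏ k ∈ Finset.range n, e k) / m ^ n * u n)
      Filter.atTop (nhds 0) := by
    have hgeom := (tendsto_pow_atTop_nhds_zero_of_lt_one (inv_nonneg.2 hm0.le)
      (inv_lt_one_of_one_lt₀ hm)).mul_const C
    rw [zero_mul] at hgeom
    refine squeeze_zero_norm (fun n ↦ ?_) hgeom
    rw [Real.norm_eq_abs, abs_mul, abs_div, abs_of_nonneg (hprod n).1,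
      abs_of_pos (pow_pos hm0 n), inv_pow, ← one_div]
    gcongr
    exacts [(hprod n).2, hu n]
  refine (hasSum_iff_tendsto_nat_of_nonneg
    (fun i ↦ mul_nonneg (hprod i).1 (div_nonneg (hc i) (pow_pos hm0 _).le)) _).2 ?_
  simpa [sub_eq_of_eq_add (hpartial _)] using (tendsto_const_nhds (x := u 0)).sub hrem

section Support

variable {μ : Measure ℝ}

theorem measure_Icc_zero_eq_zero_of_nonpos (h0 : μ {0} = 0) {b : ℝ} (hb : b ≤ 0) :
    μ (Icc 0 b) = 0 :=
  measure_mono_null (fun _ hy ↦ le_antisymm (hy.2.trans hb) hy.1) h0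

variable [IsProbabilityMeasure μ]

theorem measure_Iio_zero_eq_zero (hsupp : μ (Icc 0 1) = 1) : μ (Iio 0) = 0 :=
  measure_mono_null (fun _ hy h ↦ not_le.2 hy h.1 : Iio (0 : ℝ) ⊆ (Icc 0 1)ᶜ)
    ((prob_compl_eq_zero_iff measurableSet_Icc).2 hsupp)

theorem measure_Icc_eq_measure_Icc_zero (hsupp : μ (Icc 0 1) = 1) {a b : ℝ} (ha : a ≤ 0) :
    μ (Icc a b) = μ (Icc 0 b) := by
  have hdiff : Icc 0 b = Icc a b \ Iio 0 := by
    ext y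
    simp only [mem_Icc, mem_sdiff, mem_Iio, not_lt]
    constructor
    · rintro ⟨h0, hb⟩
      exact ⟨⟨ha.trans h0, hb⟩, h0⟩
    · rintro ⟨⟨_, hb⟩, h0⟩
      exact ⟨h0, hb⟩
  rw [hdiff, measure_sdiff_null (measure_Iio_zero_eq_zero hsupp)]

theorem measure_Icc_zero_eq_one_of_one_le (hsupp : μ (Icc 0 1) = 1) {b : ℝ} (hb : 1 ≤ b) :
    μ (Icc 0 b) = 1 :=
  le_antisymm prob_le_one (hsupp ▸ measure_mono (Icc_subset_Icc_right hb))

theorem measure_Icc_zero_add_sub_eq_ite (hsupp : μ (Icc 0 1) = 1) (h0 : μ {0} = 0) {t : ℝ}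
    (ht : t ∈ Icc 0 1) (d d₀ : ℕ) :
    μ (Icc 0 (t + d₀ - d)) =
      (if d < d₀ then 1 else 0) + (if d = d₀ then μ (Icc 0 t) else 0) := by
  rcases lt_trichotomy d d₀ with hlt | rfl | hgt
  · have : (d : ℝ) + 1 ≤ d₀ := by exact_mod_cast hlt
    rw [if_pos hlt, if_neg hlt.ne, add_zero]
    exact measure_Icc_zero_eq_one_of_one_le hsupp (by linarith [ht.1])
  · simp
  · have : (d₀ : ℝ) + 1 ≤ d := by exact_mod_cast hgt
    rw [if_neg hgt.not_gt, if_neg hgt.ne', add_zero]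
    exact measure_Icc_zero_eq_zero_of_nonpos h0 (by linarith [ht.2])

end Support

def IsSelfSimilar (N : ℕ) (D : Finset ℕ) (μ : Measure ℝ) : Prop :=
  μ = (D.card : ℝ≥0∞)⁻¹ • ∑ d ∈ D, μ.map (fun x : ℝ => (x + (d : ℝ)) / N)

namespace IsSelfSimilar

variable {N : ℕ} {D : Finset ℕ} {μ : Measure ℝ}

theorem measure_eq_sum_preimage (hμ : IsSelfSimilar N D μ) {s : Set ℝ} (hs : MeasurableSet s) :
    μ s = (D.card : ℝ≥0∞)⁻¹ * ∑ d ∈ D, μ ((fun x : ℝ => (x + (d : ℝ)) / N) ⁻¹' s) := by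
  conv_lhs => rw [hμ]
  simp only [Measure.smul_apply, Measure.coe_finsetSum, Finset.sum_apply, smul_eq_mul]
  congr 1
  exact Finset.sum_congr rfl fun d _ ↦ Measure.map_apply (by fun_prop) hs

variable [IsProbabilityMeasure μ]

theorem measure_singleton_zero (hμ : IsSelfSimilar N D μ) (hN : 0 < N) (hcard : 2 ≤ D.card)
    (hsupp : μ (Icc 0 1) = 1) : μ {0} = 0 := by
  have hatom : ∀ d ∈ D, μ ((fun x : ℝ => (x + (d : ℝ)) / N) ⁻¹' {0}) =
      if d = 0 then μ {0} else 0 := by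
    intro d _
    have hpre : (fun x : ℝ => (x + (d : ℝ)) / N) ⁻¹' {0} = {-(d : ℝ)} := by
      ext y
      simp [hN.ne', add_eq_zero_iff_eq_neg]
    rw [hpre]
    split_ifs with hd
    · simp [hd]
    · refine measure_mono_null (singleton_subset_iff.2 ?_) (measure_Iio_zero_eq_zero hsupp)
      simpa using Nat.pos_of_ne_zero hd
  have hle : μ {0} ≤ (D.card : ℝ≥0∞)⁻¹ * μ {0} := by
    conv_lhs => rw [hμ.measure_eq_sum_preimage (measurableSet_singleton 0)]
    rw [Finset.sum_congr rfl hatom, Finset.sum_ite_eq']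
    gcongr
    split_ifs <;> simp
  by_contra hne
  refine (hle.trans_lt ?_).false
  calc (D.card : ℝ≥0∞)⁻¹ * μ {0} < 1 * μ {0} :=
        ENNReal.mul_lt_mul_left hne (measure_ne_top μ _)
          (ENNReal.inv_lt_one.2 (by exact_mod_cast hcard))
    _ = μ {0} := one_mul _

theorem measure_Icc_zero_div (hμ : IsSelfSimilar N D μ) (hN : 0 < N)
    (hsupp : μ (Icc 0 1) = 1) (h0 : μ {0} = 0) (d₀ : ℕ) {t : ℝ} (ht : t ∈ Icc 0 1) :
    μ (Icc 0 ((d₀ + t) / N)) = (D.card : ℝ≥0∞)⁻¹ *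
      ((D.filter (fun d => d < d₀)).card + if d₀ ∈ D then μ (Icc 0 t) else 0) := by
  have hN' : (0 : ℝ) < N := by exact_mod_cast hN
  have hpre : ∀ d : ℕ, (fun x : ℝ => (x + (d : ℝ)) / N) ⁻¹' Icc 0 ((d₀ + t) / N) =
      Icc (-(d : ℝ)) (t + d₀ - d) := by
    intro d
    ext y
    simp only [mem_preimage, mem_Icc]
    rw [div_le_div_iff_of_pos_right hN', le_div_iff₀ hN', zero_mul]
    constructor <;> rintro ⟨h1, h2⟩ <;> constructor <;> linarith
  rw [hμ.measure_eq_sum_preimage measurableSet_Icc]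
  simp_rw [hpre, measure_Icc_eq_measure_Icc_zero hsupp (neg_nonpos.2 (Nat.cast_nonneg _)),
    measure_Icc_zero_add_sub_eq_ite hsupp h0 ht, Finset.sum_add_distrib, Finset.sum_boole,
    Finset.sum_ite_eq']

theorem toReal_measure_Icc_zero_div (hμ : IsSelfSimilar N D μ) (hN : 0 < N)
    (hsupp : μ (Icc 0 1) = 1) (h0 : μ {0} = 0) (d₀ : ℕ) {t : ℝ} (ht : t ∈ Icc 0 1) :
    (μ (Icc 0 ((d₀ + t) / N))).toReal = (((D.filter (fun d => d < d₀)).card : ℝ) +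
      (if d₀ ∈ D then 1 else 0) * (μ (Icc 0 t)).toReal) / D.card := by
  rw [hμ.measure_Icc_zero_div hN hsupp h0 d₀ ht]
  split_ifs <;> simp [ENNReal.toReal_add, div_eq_inv_mul]

end IsSelfSimilar

theorem cantor_cdf_series_formula_general
    (N : ℕ) (D : Finset ℕ)
    (hcard : 2 ≤ D.card)
    (μ : Measure ℝ) [IsProbabilityMeasure μ]
    (hsupp : μ (Set.Icc 0 1) = 1)
    (hinv : μ = (D.card : ℝ≥0∞)⁻¹ • ∑ d ∈ D, μ.map (fun x : ℝ => (x + (d : ℝ)) / N))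
    (x : ℝ)
    (a : ℕ → ℕ) (ha : ∀ i, a i < N)
    (hxa : x = ∑' i : ℕ, (a i : ℝ) / (N : ℝ) ^ (i + 1)) :
    (μ (Set.Icc 0 x)).toReal
      = ∑' i : ℕ,
          (∏ k ∈ Finset.range i, (if a k ∈ D then (1:ℝ) else 0)) *
            (((D.filter (fun d => d < a i)).card : ℝ) / (D.card : ℝ) ^ (i + 1)) := by
  have hμ : IsSelfSimilar N D μ := hinv
  have hN : 0 < N := (Nat.zero_le _).trans_lt (ha 0)
  have h0 := hμ.measure_singleton_zero hN hcard hsupp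
  let digits : ℕ → Fin N := fun i ↦ ⟨a i, ha i⟩
  let u : ℕ → ℝ := fun n ↦ (μ (Icc 0 (Real.ofDigits fun i ↦ digits (i + n)))).toReal
  have hx : x = Real.ofDigits digits := by
    rw [hxa]
    exact tsum_congr fun i ↦ div_eq_mul_inv _ _
  have hrec : ∀ n, u n = (((D.filter (fun d => d < a n)).card : ℝ) +
      (if a n ∈ D then 1 else 0) * u (n + 1)) / D.card := by
    intro n
    have htail : Real.ofDigits (fun i ↦ digits (i + n)) =
        ((a n : ℝ) + Real.ofDigits fun i ↦ digits (i + (n + 1))) / N := by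
      rw [Real.ofDigits_eq_div]
      simp only [zero_add, Nat.add_right_comm _ 1 n]
      rfl
    simp only [u, htail]
    exact hμ.toReal_measure_Icc_zero_div hN hsupp h0 (a n)
      ⟨Real.ofDigits_nonneg _, Real.ofDigits_le_one _⟩
  have hsum := hasSum_of_eq_add_mul_div (by exact_mod_cast hcard) (fun _ ↦ Nat.cast_nonneg _)
    (fun n ↦ by split_ifs <;> simp) (fun n ↦ (abs_of_nonneg ENNReal.toReal_nonneg).trans_le
      measureReal_le_one) hrec
  rw [hx]
  exact hsum.tsum_eq.symm

theorem cantor_cdf_series_formula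
    (N : ℕ) (hN : 3 ≤ N) (D : Finset ℕ) (hD : D ⊆ Finset.range N)
    (hcard : 2 ≤ D.card) (hcard' : D.card ≤ N - 1)
    (μ : Measure ℝ) [IsProbabilityMeasure μ]
    (hsupp : μ (Set.Icc 0 1) = 1)
    (hinv : μ = (D.card : ℝ≥0∞)⁻¹ • ∑ d ∈ D, μ.map (fun x : ℝ => (x + (d : ℝ)) / N))
    (x : ℝ) (hx : x ∈ Set.Ioo (0:ℝ) 1)
    (a : ℕ → ℕ) (ha : ∀ i, a i < N)
    (hxa : x = ∑' i : ℕ, (a i : ℝ) / (N : ℝ) ^ (i + 1)) :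
    (μ (Set.Icc 0 x)).toReal
      = ∑' i : ℕ,
          (∏ k ∈ Finset.range i, (if a k ∈ D then (1:ℝ) else 0)) *
            (((D.filter (fun d => d < a i)).card : ℝ) / (D.card : ℝ) ^ (i + 1)) :=
  cantor_cdf_series_formula_general N D hcard μ hsupp hinv x a ha hxa
end

section
/- Given finitely many rational data points (x_n, y_n) in (0,1)×(0,1) with distinct x-values and y monotone in x (y_m ≥ y_n whenever x_m ≥ x_n), there exists a binary digit vector B (defining a Cantor set) whose CDF interpolates the data: F_B(x_n) = y_n for all n. -/
/-!
Write `x n = a n / M` and `y n = b n / m` over common denominators and take the base `N = m * M`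
with `m` digits. The Cantor function `F` of a digit set `D` vanishes on `(-∞, 0]`, equals `1` on
`[1, ∞)` and satisfies `F x = #D⁻¹ * ∑ d ∈ D, F (N * x - d)`, so `F (A / N) = #{d ∈ D | d < A} / #D`.
It therefore suffices to place `m` digits in `[0, m * M)` so that exactly `b n` of them lie below
`m * a n`; since the `b n` increase with the `a n`, digits can be put block by block, each block
`[m * j, m * (j + 1))` having room for all of them.

`F` is the fixed point of the transfer operator `f ↦ #D⁻¹ * ∑ d ∈ D, f (N * · - d)`, which is the
action of the IFS on distribution functions. On continuous distribution functions of measures on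
`[0, 1]` it contracts uniform distances by `#D⁻¹`, because for each `x` at most one of the points
`N * x - d` lies in `(0, 1)`. The Stieltjes measure of `F` is the invariant measure.
-/

open MeasureTheory Set Filter
open BoundedContinuousFunction
open scoped ENNReal

def unitIntervalCDF : Set (ℝ →ᵇ ℝ) :=
  {f | Monotone f ∧ (∀ x ≤ 0, f x = 0) ∧ ∀ x, 1 ≤ x → f x = 1}

lemma isClosed_unitIntervalCDF : IsClosed unitIntervalCDF := by
  have hev (x : ℝ) : Continuous fun f : ℝ →ᵇ ℝ => f x :=
    (continuous_apply x).comp BoundedContinuousFunction.continuous_coe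
  simp only [unitIntervalCDF, Monotone, ofPred_and, ofPred_forall]
  refine .inter ?_ (.inter ?_ ?_) <;>
    refine isClosed_iInter fun a => isClosed_iInter fun b => ?_
  · exact isClosed_iInter fun _ => isClosed_le (hev a) (hev b)
  · exact isClosed_eq (hev a) continuous_const
  · exact isClosed_eq (hev a) continuous_const

lemma unitIntervalCDF_nonempty : unitIntervalCDF.Nonempty := by
  let clamp : ℝ →ᵇ ℝ := .mkOfBound ⟨fun x => projIcc (0 : ℝ) 1 zero_le_one x, by fun_prop⟩ 1
    fun x y => Real.dist_le_of_mem_Icc_01 (projIcc 0 1 zero_le_one x).2 (projIcc 0 1 zero_le_one y).2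
  exact ⟨clamp, fun x y hxy => monotone_projIcc zero_le_one hxy,
    fun x hx => congrArg Subtype.val (projIcc_of_le_left zero_le_one hx),
    fun x hx => congrArg Subtype.val (projIcc_of_right_le zero_le_one hx)⟩

lemma sub_eq_zero_of_mem_unitIntervalCDF {f g : ℝ →ᵇ ℝ} (hf : f ∈ unitIntervalCDF)
    (hg : g ∈ unitIntervalCDF) {t : ℝ} (ht : t ∉ Ioo 0 1) : f t - g t = 0 := by
  rcases le_or_gt t 0 with h | h
  · rw [hf.2.1 t h, hg.2.1 t h, sub_self]
  · have h1 : 1 ≤ t := by by_contra h'; exact ht ⟨h, not_le.mp h'⟩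
    rw [hf.2.2 t h1, hg.2.2 t h1, sub_self]

lemma card_filter_sub_mem_Ioo_le_one (D : Finset ℕ) (t : ℝ) :
    (D.filter fun d : ℕ => t - d ∈ Ioo 0 1).card ≤ 1 := by
  refine Finset.card_le_one.mpr fun d₁ h₁ d₂ h₂ => ?_
  obtain ⟨-, h₁0, h₁1⟩ := Finset.mem_filter.mp h₁
  obtain ⟨-, h₂0, h₂1⟩ := Finset.mem_filter.mp h₂
  have : (d₁ : ℝ) < d₂ + 1 := by linarith
  have : (d₂ : ℝ) < d₁ + 1 := by linarith
  norm_cast at *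
  omega

lemma abs_sum_comp_sub_natCast_le {h : ℝ → ℝ} {C : ℝ} (hC : ∀ t, |h t| ≤ C)
    (hsupp : ∀ t ∉ Ioo (0 : ℝ) 1, h t = 0) (D : Finset ℕ) (t : ℝ) :
    |∑ d ∈ D, h (t - d)| ≤ C := by
  have hC0 : 0 ≤ C := (abs_nonneg _).trans (hC 0)
  rw [← Finset.sum_filter_of_ne fun d _ hd => not_not.mp (mt (hsupp _) hd)]
  set E := D.filter fun d : ℕ => t - d ∈ Ioo 0 1
  calc |∑ d ∈ E, h (t - d)|
      ≤ ∑ d ∈ E, |h (t - d)| := Finset.abs_sum_le_sum_abs _ _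
    _ ≤ E.card • C := Finset.sum_le_card_nsmul _ _ _ fun d _ => hC (t - d)
    _ ≤ 1 • C := by gcongr; exact card_filter_sub_mem_Ioo_le_one D t
    _ = C := one_nsmul C

noncomputable def cantorOp (N : ℕ) (D : Finset ℕ) (f : ℝ →ᵇ ℝ) : ℝ →ᵇ ℝ :=
  (D.card : ℝ)⁻¹ • ∑ d ∈ D, f.compContinuous ⟨fun x => N * x - d, by fun_prop⟩

lemma cantorOp_apply (N : ℕ) (D : Finset ℕ) (f : ℝ →ᵇ ℝ) (x : ℝ) :
    cantorOp N D f x = (D.card : ℝ)⁻¹ * ∑ d ∈ D, f (N * x - d) := by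
  simp [cantorOp]

section cantorOp

variable {N : ℕ} {D : Finset ℕ}

lemma mapsTo_cantorOp (hD : D ⊆ Finset.range N) (hD₀ : D.Nonempty) :
    MapsTo (cantorOp N D) unitIntervalCDF unitIntervalCDF := by
  rintro f ⟨hmono, hzero, hone⟩
  refine ⟨fun a b hab => ?_, fun x hx => ?_, fun x hx => ?_⟩
  · simp only [cantorOp_apply]
    gcongr with d
    exact hmono (by gcongr)
  · rw [cantorOp_apply, Finset.sum_eq_zero fun d _ => hzero _ ?_, mul_zero]
    nlinarith [(N.cast_nonneg : (0 : ℝ) ≤ N), (d.cast_nonneg : (0 : ℝ) ≤ d)]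
  · have hN (d) (hd : d ∈ D) : (d : ℝ) + 1 ≤ N := by
      exact_mod_cast Finset.mem_range.mp (hD hd)
    rw [cantorOp_apply, Finset.sum_congr rfl fun d hd => hone _ ?_]
    · simp [hD₀.card_ne_zero]
    · nlinarith [hN d hd]

lemma dist_cantorOp_le {f g : ℝ →ᵇ ℝ} (hf : f ∈ unitIntervalCDF) (hg : g ∈ unitIntervalCDF) :
    dist (cantorOp N D f) (cantorOp N D g) ≤ (D.card : ℝ)⁻¹ * dist f g := by
  refine (BoundedContinuousFunction.dist_le (by positivity)).mpr fun x => ?_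
  have hsum := abs_sum_comp_sub_natCast_le (h := fun t => f t - g t)
    (C := dist f g) (fun t => by simpa only [Real.dist_eq] using f.dist_coe_le_dist (g := g) t)
    (fun t ht => sub_eq_zero_of_mem_unitIntervalCDF hf hg ht) D (N * x)
  rw [Real.dist_eq, cantorOp_apply, cantorOp_apply, ← mul_sub, ← Finset.sum_sub_distrib, abs_mul,
    abs_of_nonneg (by positivity)]
  gcongr

lemma exists_fixedPoint_cantorOp (hD : D ⊆ Finset.range N) (hcard : 2 ≤ D.card) :
    ∃ F ∈ unitIntervalCDF, cantorOp N D F = F := by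
  have hD₀ : D.Nonempty := Finset.card_pos.mp (by omega)
  have hmaps := mapsTo_cantorOp hD hD₀
  have hcontr : ContractingWith (D.card : NNReal)⁻¹ (hmaps.restrict _ _ _) := by
    refine ⟨?_, LipschitzWith.of_dist_le_mul fun f g => ?_⟩
    · rw [inv_lt_one₀ (by positivity)]
      exact_mod_cast hcard
    · simpa [Subtype.dist_eq] using dist_cantorOp_le f.2 g.2
  obtain ⟨f₀, hf₀⟩ := unitIntervalCDF_nonempty
  obtain ⟨F, hF, hfix, -⟩ := hcontr.exists_fixedPoint' isClosed_unitIntervalCDF.isComplete hmaps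
    hf₀ (edist_ne_top _ _)
  exact ⟨F, hF, hfix⟩

lemma sum_apply_mul_sub_natCast_of_cantorOp_eq {F : ℝ →ᵇ ℝ} (hfix : cantorOp N D F = F)
    (hD : D.Nonempty) (x : ℝ) :
    ∑ d ∈ D, F (N * x - d) = D.card * F x := by
  rw [← inv_mul_eq_iff_eq_mul₀ (by exact_mod_cast hD.card_ne_zero), ← cantorOp_apply, hfix]

end cantorOp

namespace BoundedContinuousFunction

noncomputable def toStieltjes (F : ℝ →ᵇ ℝ) (hF : Monotone F) : StieltjesFunction ℝ where
  toFun := F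
  mono' := hF
  right_continuous' _ := F.continuous.continuousWithinAt

variable {F : ℝ →ᵇ ℝ}

@[simp]
lemma coe_toStieltjes (hF : Monotone F) : ⇑(F.toStieltjes hF) = F := rfl

lemma measure_toStieltjes_Icc (hF : Monotone F) (a b : ℝ) :
    (F.toStieltjes hF).measure (Icc a b) = ENNReal.ofReal (F b - F a) := by
  rw [StieltjesFunction.measure_Icc, coe_toStieltjes, F.continuous.continuousWithinAt.leftLim_eq]

variable (hF : F ∈ unitIntervalCDF)
include hF

lemma isProbabilityMeasure_toStieltjes : IsProbabilityMeasure (F.toStieltjes hF.1).measure := by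
  refine StieltjesFunction.isProbabilityMeasure _ ?_ ?_
  · refine tendsto_const_nhds.congr' ?_
    filter_upwards [eventually_le_atBot 0] with x hx using (hF.2.1 x hx).symm
  · refine tendsto_const_nhds.congr' ?_
    filter_upwards [eventually_ge_atTop 1] with x hx using (hF.2.2 x hx).symm

lemma measure_toStieltjes_Icc_zero_one : (F.toStieltjes hF.1).measure (Icc 0 1) = 1 := by
  rw [measure_toStieltjes_Icc, hF.2.1 0 le_rfl, hF.2.2 1 le_rfl, sub_zero, ENNReal.ofReal_one]

variable {N : ℕ} {D : Finset ℕ} (hfix : cantorOp N D F = F)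
include hfix

lemma measure_toStieltjes_eq_smul_sum_map (hN : 0 < N) (hD : D.Nonempty) :
    (F.toStieltjes hF.1).measure =
      (D.card : ℝ≥0∞)⁻¹ • ∑ d ∈ D, (F.toStieltjes hF.1).measure.map (fun t : ℝ => (t + d) / N) := by
  refine Measure.ext_of_Ioc _ _ fun a b hab => ?_
  have hpre (d : ℕ) :
      (fun t : ℝ => (t + d) / N) ⁻¹' Ioc a b = Ioc (N * a - d) (N * b - d) := by
    have hN' : (0 : ℝ) < N := by exact_mod_cast hN
    ext t
    simp only [mem_preimage, mem_Ioc, lt_div_iff₀ hN', div_le_iff₀ hN']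
    constructor <;> rintro ⟨h₁, h₂⟩ <;> constructor <;> linarith
  have hmap (d : ℕ) : (F.toStieltjes hF.1).measure.map (fun t : ℝ => (t + d) / N) (Ioc a b) =
      ENNReal.ofReal (F (N * b - d) - F (N * a - d)) := by
    rw [Measure.map_apply (by fun_prop) measurableSet_Ioc, hpre, StieltjesFunction.measure_Ioc,
      coe_toStieltjes]
  have hsum : ∑ d ∈ D, (F (N * b - d) - F (N * a - d)) = D.card * (F b - F a) := by
    rw [Finset.sum_sub_distrib, sum_apply_mul_sub_natCast_of_cantorOp_eq hfix hD,
      sum_apply_mul_sub_natCast_of_cantorOp_eq hfix hD, mul_sub]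
  rw [Measure.smul_apply, Measure.coe_finsetSum, Finset.sum_apply,
    Finset.sum_congr rfl fun d _ => hmap d,
    ← ENNReal.ofReal_sum_of_nonneg fun d _ => sub_nonneg.mpr (hF.1 (by gcongr)), hsum,
    ENNReal.ofReal_mul (Nat.cast_nonneg _), ENNReal.ofReal_natCast, smul_eq_mul, ← mul_assoc,
    ENNReal.inv_mul_cancel (by exact_mod_cast hD.card_ne_zero) (ENNReal.natCast_ne_top _),
    one_mul, StieltjesFunction.measure_Ioc, coe_toStieltjes]

lemma apply_natCast_div_of_cantorOp_eq (hN : 0 < N) (A : ℕ) :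
    F (A / N) = (D.filter (· < A)).card / D.card := by
  rw [← hfix, cantorOp_apply, Finset.sum_congr rfl fun (d : ℕ) _ =>
    (?_ : F (N * (A / N) - (d : ℝ)) = if d < A then 1 else 0), Finset.sum_boole, div_eq_inv_mul]
  rw [mul_div_cancel₀ _ (by positivity)]
  split_ifs with h
  · exact hF.2.2 _ (by rw [le_sub_iff_add_le']; exact_mod_cast h)
  · exact hF.2.1 _ (by rw [sub_nonpos]; exact_mod_cast not_lt.mp h)

lemma measure_toStieltjes_Icc_zero_natCast_div (hN : 0 < N) (A : ℕ) :
    (F.toStieltjes hF.1).measure (Icc 0 (A / N)) =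
      ENNReal.ofReal ((D.filter (· < A)).card / D.card) := by
  rw [measure_toStieltjes_Icc, hF.2.1 0 le_rfl, sub_zero,
    apply_natCast_div_of_cantorOp_eq hF hfix hN]

end BoundedContinuousFunction

lemma exists_ge_forall_eq_natCast_div {ι : Type*} [Fintype ι] (q : ι → ℚ) (hq : ∀ n, 0 ≤ q n)
    {L : ℕ} (hL : 0 < L) : ∃ Q : ℕ, L ≤ Q ∧ ∃ a : ι → ℕ, ∀ n, q n = a n / Q := by
  have hden : 0 < ∏ n, (q n).den := Finset.prod_pos fun n _ => (q n).den_pos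
  refine ⟨L * ∏ n, (q n).den, Nat.le_mul_of_pos_right _ hden, ?_⟩
  choose a ha using fun n => show ∃ a : ℕ, q n = a / (L * ∏ n, (q n).den : ℕ) by
    obtain ⟨t, ht⟩ := Finset.dvd_prod_of_mem (fun n => (q n).den) (Finset.mem_univ n)
    obtain ⟨z, hz⟩ := Int.eq_ofNat_of_zero_le (Rat.num_nonneg.mpr (hq n))
    refine ⟨z * t * L, ?_⟩
    rw [eq_div_iff (by positivity), ht]
    push_cast
    rw [← Int.cast_natCast z, ← hz, ← Rat.mul_den_eq_num]
    ring
  exact ⟨a, ha⟩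

lemma exists_subset_range_card_filter_lt_eq {ι : Type*} {m M : ℕ} (hM : 0 < M) {a b : ι → ℕ}
    (ha₀ : ∀ n, 0 < a n) (haM : ∀ n, a n < M) (hbm : ∀ n, b n ≤ m)
    (hab : ∀ n n', a n' ≤ a n → b n' ≤ b n) :
    ∃ D ⊆ Finset.range (m * M), D.card = m ∧ ∀ n, (D.filter (· < m * a n)).card = b n := by
  -- Digit `i` sits at offset `i` in block `c i - 1`, where `c i` is the least `a n` with `i < b n`.
  let S (i : ℕ) : Set ℕ := insert M {v | ∃ n, i < b n ∧ a n = v}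
  let c (i : ℕ) : ℕ := sInf (S i)
  have hc_mem (i : ℕ) : c i ∈ S i := Nat.sInf_mem (insert_nonempty _ _)
  have hc_pos (i : ℕ) : 0 < c i := by
    rcases hc_mem i with h | ⟨n, -, h⟩
    · exact h ▸ hM
    · exact h ▸ ha₀ n
  have hc_mono : Monotone c := fun i j hij =>
    csInf_le_csInf (OrderBot.bddBelow _) (insert_nonempty _ _)
      (insert_subset_insert fun v ⟨n, hn, hv⟩ => ⟨n, by omega, hv⟩)
  have hc_le_iff (i n) : c i ≤ a n ↔ i < b n := by
    refine ⟨fun h => ?_, fun h => Nat.sInf_le (mem_insert_of_mem _ ⟨n, h, rfl⟩)⟩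
    rcases hc_mem i with h' | ⟨n', hn', h'⟩
    · exact absurd (h' ▸ h) (haM n).not_ge
    · exact hn'.trans_le (hab n n' (h' ▸ h))
  let p (i : ℕ) : ℕ := m * (c i - 1) + i
  have hp_mono : StrictMono p := fun i j hij => by
    have := Nat.mul_le_mul_left m (Nat.sub_le_sub_right (hc_mono hij.le) 1)
    exact Nat.add_lt_add_of_le_of_lt this hij
  have hp_lt_iff {i : ℕ} (hi : i < m) (A : ℕ) : p i < m * A ↔ c i ≤ A := by
    have hm : 0 < m := by omega
    rw [mul_comm, ← Nat.div_lt_iff_lt_mul hm, Nat.mul_add_div hm, Nat.div_eq_of_lt hi]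
    have := hc_pos i
    omega
  refine ⟨(Finset.range m).map ⟨p, hp_mono.injective⟩, ?_, by simp, fun n => ?_⟩
  · simp only [Finset.subset_iff, Finset.mem_map, Finset.mem_range]
    rintro _ ⟨i, hi, rfl⟩
    exact (hp_lt_iff hi M).mpr (csInf_le (OrderBot.bddBelow _) (mem_insert _ _))
  · rw [Finset.filter_map, Finset.card_map]
    convert Finset.card_range (b n) using 2
    ext i
    simp only [Finset.mem_filter, Finset.mem_range, Function.comp_apply,
      Function.Embedding.coeFn_mk]
    constructor
    · rintro ⟨hi, h⟩
      exact (hc_le_iff i n).mp ((hp_lt_iff hi _).mp h)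
    · intro h
      have hi : i < m := h.trans_le (hbm n)
      exact ⟨hi, (hp_lt_iff hi _).mpr ((hc_le_iff i n).mpr h)⟩

theorem exists_cantorMeasure_Icc_natCast_div {ι : Type*} {m M : ℕ} (hm : 2 ≤ m) (hM : 0 < M)
    {a b : ι → ℕ} (ha₀ : ∀ n, 0 < a n) (haM : ∀ n, a n < M) (hbm : ∀ n, b n ≤ m)
    (hab : ∀ n n', a n' ≤ a n → b n' ≤ b n) :
    ∃ (D : Finset ℕ) (μ : Measure ℝ), D ⊆ Finset.range (m * M) ∧ D.card = m ∧
      IsProbabilityMeasure μ ∧ μ (Icc 0 1) = 1 ∧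
      μ = (D.card : ℝ≥0∞)⁻¹ • ∑ d ∈ D, μ.map (fun t : ℝ => (t + d) / (m * M : ℕ)) ∧
      ∀ n, (μ (Icc 0 (a n / M))).toReal = b n / m := by
  obtain ⟨D, hDN, hDcard, hDcount⟩ := exists_subset_range_card_filter_lt_eq hM ha₀ haM hbm hab
  have hD₀ : D.Nonempty := Finset.card_pos.mp (by omega)
  obtain ⟨F, hF, hfix⟩ := exists_fixedPoint_cantorOp hDN (by omega)
  refine ⟨D, (F.toStieltjes hF.1).measure, hDN, hDcard, isProbabilityMeasure_toStieltjes hF,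
    measure_toStieltjes_Icc_zero_one hF,
    measure_toStieltjes_eq_smul_sum_map hF hfix (by positivity) hD₀, fun n => ?_⟩
  have hdiv : (a n : ℝ) / M = (m * a n : ℕ) / (m * M : ℕ) := by
    push_cast
    rw [mul_div_mul_left _ _ (by positivity)]
  rw [hdiv, measure_toStieltjes_Icc_zero_natCast_div hF hfix (by positivity), hDcount, hDcard,
    ENNReal.toReal_ofReal (by positivity)]

theorem cantor_cdf_interpolation_general
    (k : ℕ) (x y : Fin k → ℚ)
    (hx0 : ∀ n, 0 < x n) (hx1 : ∀ n, x n < 1)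
    (hy0 : ∀ n, 0 < y n) (hy1 : ∀ n, y n < 1)
    (hmono : ∀ m n, x n ≤ x m → y n ≤ y m) :
    ∃ (N : ℕ) (D : Finset ℕ) (μ : Measure ℝ),
      3 ≤ N ∧ D ⊆ Finset.range N ∧ 2 ≤ D.card ∧ D.card ≤ N - 1 ∧
      IsProbabilityMeasure μ ∧ μ (Set.Icc 0 1) = 1 ∧
      μ = (D.card : ℝ≥0∞)⁻¹ • ∑ d ∈ D, μ.map (fun t : ℝ => (t + (d : ℝ)) / N) ∧
      ∀ n, (μ (Set.Icc 0 ((x n : ℝ)))).toReal = (y n : ℝ) := by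
  obtain ⟨M, hM, a, ha⟩ := exists_ge_forall_eq_natCast_div x (fun n => (hx0 n).le) two_pos
  obtain ⟨m, hm, b, hb⟩ := exists_ge_forall_eq_natCast_div y (fun n => (hy0 n).le) two_pos
  have hMq : (0 : ℚ) < M := by norm_cast; omega
  have hmq : (0 : ℚ) < m := by norm_cast; omega
  obtain ⟨D, μ, hDN, hDcard, hprob, hμ01, hμ, hval⟩ := exists_cantorMeasure_Icc_natCast_div hm
    (by omega : 0 < M) (a := a) (b := b)
    (fun n => by exact_mod_cast (div_pos_iff_of_pos_right hMq).mp (ha n ▸ hx0 n))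
    (fun n => by exact_mod_cast (div_lt_one hMq).mp (ha n ▸ hx1 n))
    (fun n => by exact_mod_cast (div_le_one hmq).mp (hb n ▸ (hy1 n).le))
    (fun n n' h => by
      have hxx : x n' ≤ x n := by rw [ha, ha]; gcongr
      exact_mod_cast (div_le_div_iff_of_pos_right hmq).mp (hb n ▸ hb n' ▸ hmono n n' hxx))
  refine ⟨m * M, D, μ, by nlinarith, hDN, by omega, ?_, hprob, hμ01, hμ, fun n => ?_⟩
  · have := Nat.mul_le_mul_left m hM
    omega
  simpa [ha n, hb n] using hval n

theorem cantor_cdf_interpolation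
    (k : ℕ) (x y : Fin k → ℚ)
    (hx0 : ∀ n, 0 < x n) (hx1 : ∀ n, x n < 1)
    (hy0 : ∀ n, 0 < y n) (hy1 : ∀ n, y n < 1)
    (hxdist : ∀ m n, m ≠ n → x m ≠ x n)
    (hmono : ∀ m n, x n ≤ x m → y n ≤ y m) :
    ∃ (N : ℕ) (D : Finset ℕ) (μ : Measure ℝ),
      3 ≤ N ∧ D ⊆ Finset.range N ∧ 2 ≤ D.card ∧ D.card ≤ N - 1 ∧
      IsProbabilityMeasure μ ∧ μ (Set.Icc 0 1) = 1 ∧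
      μ = (D.card : ℝ≥0∞)⁻¹ • ∑ d ∈ D, μ.map (fun t : ℝ => (t + (d : ℝ)) / N) ∧
      ∀ n, (μ (Set.Icc 0 ((x n : ℝ)))).toReal = (y n : ℝ) :=
  cantor_cdf_interpolation_general k x y hx0 hx1 hy0 hy1 hmono
end

section
/- Fix N ≥ 4 and any set of fewer than ⌊N/2⌋ sample points x_1 ≤ ... ≤ x_k in [0,1]. Then there exist two distinct Cantor CDFs F_B and F_C, both with scale factor N, such that F_B(x_n) = F_C(x_n) for all n. Hence no set of fewer than ⌊N/2⌋ points is a set of uniqueness for scale factor N. -/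
/-!
For digits `a < b`, the Cantor measure of `{a, b}` with scale factor `N` is the image of Lebesgue
measure on `[0, 1)` under the map that rewrites binary digits `0, 1` as base-`N` digits `a, b`.
Its CDF vanishes up to `a / (N - 1)`, equals `1` from `b / (N - 1)` on, and, by self-similarity,
equals `1/2` on the gap between its two first-level pieces.

With nodes `j / (N - 1)`, the CDFs for `{e, e + 1}` and `{e, e + 2}` differ at node `e + 1`, but
agree outside the window between nodes `e` and `e + 2`; so we are done if some window has no
sample. Otherwise the `⌊N/2⌋ - 1` disjoint windows starting at even nodes each hold exactly one
sample, and the window starting at node `N - 3` forces one sample between nodes `N - 3` and `N - 2`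
and all the others at or below node `N - 4`. Depending on where that sample sits, the pair
`{N - 3, N - 1}, {N - 4, N - 1}` or the pair `{N - 4, N - 2}, {N - 4, N - 1}` has both CDFs equal
to `1/2` there and to `0` at the other samples.
-/

open MeasureTheory Set Function
open scoped ENNReal

namespace TwoDigitCantor

/-- The coefficient of `2⁻¹ ^ (i + 1)` in the binary expansion of `y ∈ [0, 1)`. -/
noncomputable def binaryDigit (i : ℕ) (y : ℝ) : ℤ := ⌊y * 2 ^ (i + 1)⌋ % 2

lemma binaryDigit_eq_zero_or_one (i : ℕ) (y : ℝ) :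
    binaryDigit i y = 0 ∨ binaryDigit i y = 1 :=
  Int.emod_two_eq_zero_or_one _

lemma binaryDigit_nonneg (i : ℕ) (y : ℝ) : (0 : ℝ) ≤ binaryDigit i y := by
  rcases binaryDigit_eq_zero_or_one i y with h | h <;> simp [h]

lemma binaryDigit_le_one (i : ℕ) (y : ℝ) : (binaryDigit i y : ℝ) ≤ 1 := by
  rcases binaryDigit_eq_zero_or_one i y with h | h <;> simp [h]

lemma binaryDigit_succ (i : ℕ) (y : ℝ) (c : ℤ) :
    binaryDigit (i + 1) y = binaryDigit i (2 * y - c) := by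
  have h : (2 * y - c) * 2 ^ (i + 1) = y * 2 ^ (i + 1 + 1) + (-(c * 2 ^ (i + 1)) : ℤ) := by
    push_cast; ring
  rw [binaryDigit, binaryDigit, h, Int.floor_add_intCast]
  have h2 : (2 : ℤ) ∣ c * 2 ^ (i + 1) := Dvd.dvd.mul_left (dvd_pow_self 2 i.succ_ne_zero) c
  omega

lemma binaryDigit_zero_of_lt_half {y : ℝ} (hy₀ : 0 ≤ y) (hy : y < 1 / 2) :
    binaryDigit 0 y = 0 := by
  have : ⌊y * 2 ^ (0 + 1)⌋ = 0 :=
    Int.floor_eq_zero_iff.2 ⟨by positivity, by rw [zero_add, pow_one]; linarith⟩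
  rw [binaryDigit, this, Int.zero_emod]

lemma binaryDigit_zero_of_half_le {y : ℝ} (hy : 1 / 2 ≤ y) (hy₁ : y < 1) :
    binaryDigit 0 y = 1 := by
  have : ⌊y * 2 ^ (0 + 1)⌋ = 1 :=
    Int.floor_eq_iff.2 ⟨by push_cast; linarith, by push_cast; linarith⟩
  rw [binaryDigit, this]
  rfl

lemma measurable_binaryDigit (i : ℕ) : Measurable fun y => (binaryDigit i y : ℝ) :=
  (measurable_from_top (f := fun z : ℤ => ((z % 2 : ℤ) : ℝ))).comp
    (Int.measurable_floor.comp (measurable_id.mul_const _))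

section Coding

variable {N : ℝ}

lemma hasSum_inv_pow_succ (hN : 1 < N) :
    HasSum (fun i : ℕ => (N ^ (i + 1))⁻¹) (N - 1)⁻¹ := by
  have h := (hasSum_geometric_of_lt_one (inv_nonneg.2 (zero_le_one.trans hN.le))
    (inv_lt_one_of_one_lt₀ hN)).mul_left N⁻¹
  have hterm : (fun i : ℕ => (N ^ (i + 1))⁻¹) = fun i => N⁻¹ * N⁻¹ ^ i := by
    funext i; rw [pow_succ', mul_inv, inv_pow]
  have hsum : (N - 1)⁻¹ = N⁻¹ * (1 - N⁻¹)⁻¹ := by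
    have : N ≠ 0 := (zero_lt_one.trans hN).ne'
    rw [← mul_inv, mul_sub, mul_inv_cancel₀ this, mul_one]
  rwa [hterm, hsum]

/-- Reads the binary digits of `y` as digits in base `N`. -/
noncomputable def cantorCoding (N y : ℝ) : ℝ := ∑' i, (binaryDigit i y : ℝ) / N ^ (i + 1)

lemma summable_cantorCoding (hN : 1 < N) (y : ℝ) :
    Summable fun i => (binaryDigit i y : ℝ) / N ^ (i + 1) :=
  (hasSum_inv_pow_succ hN).summable.of_nonneg_of_le
    (fun i => div_nonneg (binaryDigit_nonneg i y) (by positivity))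
    (fun i => (div_le_div_of_nonneg_right (binaryDigit_le_one i y) (by positivity)).trans_eq
      (one_div _))

lemma cantorCoding_nonneg (hN : 1 < N) (y : ℝ) : 0 ≤ cantorCoding N y :=
  tsum_nonneg fun i => div_nonneg (binaryDigit_nonneg i y) (by positivity)

lemma cantorCoding_le (hN : 1 < N) (y : ℝ) : cantorCoding N y ≤ (N - 1)⁻¹ :=
  hasSum_le
    (fun i => (div_le_div_of_nonneg_right (binaryDigit_le_one i y) (by positivity)).trans_eq
      (one_div _))
    (summable_cantorCoding hN y).hasSum (hasSum_inv_pow_succ hN)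

lemma cantorCoding_eq (hN : 1 < N) (y : ℝ) (c : ℤ) :
    cantorCoding N y = (binaryDigit 0 y + cantorCoding N (2 * y - c)) / N := by
  rw [cantorCoding, (summable_cantorCoding hN y).tsum_eq_zero_add, cantorCoding, add_div,
    ← tsum_div_const]
  congr 1
  · simp
  · refine tsum_congr fun i => ?_
    rw [binaryDigit_succ i y c, pow_succ, div_div]

lemma cantorCoding_pos (hN : 1 < N) {y : ℝ} (hy₀ : 0 < y) (hy₁ : y < 1) :
    0 < cantorCoding N y := by
  have hN₀ : 0 < N := zero_lt_one.trans hN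
  suffices h : ∀ n : ℕ, ∀ y, 1 ≤ 2 ^ n * y → y < 1 → 0 < cantorCoding N y by
    obtain ⟨n, hn⟩ := pow_unbounded_of_one_lt y⁻¹ one_lt_two
    exact h n y ((inv_lt_iff_one_lt_mul₀ hy₀).1 hn).le hy₁
  intro n
  induction n with
  | zero => intro y h1 h2; simp only [pow_zero, one_mul] at h1; linarith
  | succ n ih =>
    intro y h1 h2
    have hy₀ : 0 ≤ y := by
      by_contra! h; nlinarith [pow_pos (two_pos : (0:ℝ) < 2) (n + 1)]
    rcases lt_or_ge y (1 / 2) with hy | hy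
    · rw [cantorCoding_eq hN y 0, binaryDigit_zero_of_lt_half hy₀ hy]
      push_cast
      exact div_pos (by simpa using ih (2 * y) (by rw [pow_succ] at h1; linarith) (by linarith))
        hN₀
    · rw [cantorCoding_eq hN y 1, binaryDigit_zero_of_half_le hy h2]
      push_cast
      exact div_pos (by linarith [cantorCoding_nonneg hN (2 * y - 1)]) hN₀

lemma measurable_cantorCoding (hN : 1 < N) : Measurable (cantorCoding N) :=
  measurable_of_tendsto_metrizable
    (fun _ => Finset.measurable_sum _ fun i _ => (measurable_binaryDigit i).div_const _)
    (tendsto_pi_nhds.2 fun y => (summable_cantorCoding hN y).hasSum.tendsto_sum_nat)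

end Coding

lemma map_two_mul_sub_volume_restrict (c : ℝ) :
    (volume.restrict (Ico (c / 2) ((c + 1) / 2))).map (fun y => 2 * y - c)
      = (2 : ℝ≥0∞)⁻¹ • volume.restrict (Ico 0 1) := by
  have hmeas : Measurable fun y : ℝ => 2 * y - c := by fun_prop
  have hpre : (fun y : ℝ => 2 * y - c) ⁻¹' Ico 0 1 = Ico (c / 2) ((c + 1) / 2) := by
    ext y
    simp only [mem_preimage, mem_Ico]
    constructor <;> intro h <;> constructor <;> linarith [h.1, h.2]
  have hmap : volume.map (fun y : ℝ => 2 * y - c) = (2 : ℝ≥0∞)⁻¹ • volume := by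
    rw [show (fun y : ℝ => 2 * y - c) = (· + -c) ∘ (2 * ·) by funext y; simp [sub_eq_add_neg],
      ← Measure.map_map (measurable_add_const _) (measurable_const_mul _),
      Real.map_volume_mul_left two_ne_zero, Measure.map_smul, map_add_right_eq_self, abs_inv,
      abs_two, ENNReal.ofReal_inv_of_pos two_pos, ENNReal.ofReal_ofNat]
  rw [← hpre, ← Measure.restrict_map hmeas measurableSet_Ico, hmap, Measure.restrict_smul]

lemma map_volume_restrict_half {Φ f : ℝ → ℝ} (hΦ : Measurable Φ) (hf : Measurable f) (c : ℝ)
    (h : ∀ y ∈ Ico (c / 2) ((c + 1) / 2), Φ y = f (Φ (2 * y - c))) :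
    (volume.restrict (Ico (c / 2) ((c + 1) / 2))).map Φ
      = (2 : ℝ≥0∞)⁻¹ • ((volume.restrict (Ico 0 1)).map Φ).map f := by
  have hae :
      Φ =ᵐ[volume.restrict (Ico (c / 2) ((c + 1) / 2))] (f ∘ Φ) ∘ fun y => 2 * y - c :=
    (ae_restrict_iff' measurableSet_Ico).2 (Filter.Eventually.of_forall h)
  have hmeas : Measurable fun y : ℝ => 2 * y - c := by fun_prop
  rw [Measure.map_congr hae, ← Measure.map_map (hf.comp hΦ) hmeas,
    map_two_mul_sub_volume_restrict, Measure.map_smul, Measure.map_map hf hΦ]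

section Node

variable {N a b c : ℝ}

/-- The fixed point of `t ↦ (t + a) / N`. -/
noncomputable def node (N a : ℝ) : ℝ := a / (N - 1)

lemma node_nonneg (hN : 1 < N) (ha : 0 ≤ a) : 0 ≤ node N a :=
  div_nonneg ha (sub_nonneg.2 hN.le)

lemma node_le_one (hN : 1 < N) (ha : a ≤ N - 1) : node N a ≤ 1 :=
  div_le_one_of_le₀ ha (sub_nonneg.2 hN.le)

lemma strictMono_node (hN : 1 < N) : StrictMono fun j : ℕ => node N j :=
  fun _ _ h => div_lt_div_of_pos_right (by exact_mod_cast h) (sub_pos.2 hN)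

lemma add_node_div_le_node_iff (hN : 1 < N) :
    (a + node N b) / N ≤ node N c ↔ a * (N - 1) + b ≤ c * N := by
  have := sub_pos.2 hN
  rw [node, node, div_le_div_iff₀ (by linarith) this, add_mul, div_mul_cancel₀ _ this.ne']

lemma node_le_add_node_div_iff (hN : 1 < N) :
    node N c ≤ (a + node N b) / N ↔ c * N ≤ a * (N - 1) + b := by
  have := sub_pos.2 hN
  rw [node, node, div_le_div_iff₀ this (by linarith), add_mul, div_mul_cancel₀ _ this.ne']

end Node

section CantorMeasure

variable {N a b : ℝ}

/-- Parametrises the attractor of `{t ↦ (t + a) / N, t ↦ (t + b) / N}` by `[0, 1)`. -/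
noncomputable def cantorMap (N a b y : ℝ) : ℝ := node N a + (b - a) * cantorCoding N y

noncomputable def cantorMeasure (N a b : ℝ) : Measure ℝ :=
  (volume.restrict (Ico 0 1)).map (cantorMap N a b)

/-- The gap between the two first-level pieces of the attractor, where the CDF is `1/2`. -/
def middleGap (N a b : ℝ) : Set ℝ := Icc ((a + node N b) / N) ((b + node N a) / N)

lemma cantorMap_eq (hN : 1 < N) (y : ℝ) (c : ℤ) :
    cantorMap N a b y = (a + (b - a) * binaryDigit 0 y + cantorMap N a b (2 * y - c)) / N := by
  have : N - 1 ≠ 0 := sub_ne_zero.2 hN.ne'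
  have : N ≠ 0 := (zero_lt_one.trans hN).ne'
  rw [cantorMap, cantorMap, cantorCoding_eq hN y c, node]
  field_simp
  ring

lemma cantorMap_of_lt_half (hN : 1 < N) {y : ℝ} (hy₀ : 0 ≤ y) (hy : y < 1 / 2) :
    cantorMap N a b y = (cantorMap N a b (2 * y) + a) / N := by
  rw [cantorMap_eq hN y 0, binaryDigit_zero_of_lt_half hy₀ hy, Int.cast_zero, sub_zero]
  ring

lemma cantorMap_of_half_le (hN : 1 < N) {y : ℝ} (hy : 1 / 2 ≤ y) (hy₁ : y < 1) :
    cantorMap N a b y = (cantorMap N a b (2 * y - 1) + b) / N := by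
  rw [cantorMap_eq hN y 1, binaryDigit_zero_of_half_le hy hy₁]
  push_cast; ring

lemma node_le_cantorMap (hN : 1 < N) (hab : a ≤ b) (y : ℝ) : node N a ≤ cantorMap N a b y :=
  le_add_of_nonneg_right (mul_nonneg (sub_nonneg.2 hab) (cantorCoding_nonneg hN y))

lemma cantorMap_le_node (hN : 1 < N) (hab : a ≤ b) (y : ℝ) :
    cantorMap N a b y ≤ node N b := by
  have h := mul_le_mul_of_nonneg_left (cantorCoding_le hN y) (sub_nonneg.2 hab)
  rw [cantorMap, node, node]
  rw [← div_eq_mul_inv] at h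
  linarith [sub_div b a (N - 1)]

lemma node_lt_cantorMap (hN : 1 < N) (hab : a < b) {y : ℝ} (hy₀ : 0 < y) (hy₁ : y < 1) :
    node N a < cantorMap N a b y :=
  lt_add_of_pos_right _ (mul_pos (sub_pos.2 hab) (cantorCoding_pos hN hy₀ hy₁))

lemma measurable_cantorMap (hN : 1 < N) : Measurable (cantorMap N a b) :=
  measurable_const.add ((measurable_cantorCoding hN).const_mul _)

lemma isProbabilityMeasure_cantorMeasure (hN : 1 < N) :
    IsProbabilityMeasure (cantorMeasure N a b) :=
  have : IsProbabilityMeasure (volume.restrict (Ico (0 : ℝ) 1)) := ⟨by simp⟩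
  Measure.isProbabilityMeasure_map (measurable_cantorMap hN).aemeasurable

lemma cantorMeasure_eq_average (hN : 1 < N) :
    cantorMeasure N a b = (2 : ℝ≥0∞)⁻¹ • (cantorMeasure N a b).map (fun t => (t + a) / N)
      + (2 : ℝ≥0∞)⁻¹ • (cantorMeasure N a b).map (fun t => (t + b) / N) := by
  have hΦ := measurable_cantorMap (a := a) (b := b) hN
  have hsplit : volume.restrict (Ico (0 : ℝ) 1)
      = volume.restrict (Ico (0 / 2) ((0 + 1) / 2))
        + volume.restrict (Ico (1 / 2) ((1 + 1) / 2)) := by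
    rw [← Measure.restrict_union (by norm_num) measurableSet_Ico]
    norm_num
  conv_lhs => rw [cantorMeasure, hsplit, Measure.map_add _ _ hΦ]
  rw [map_volume_restrict_half hΦ ((measurable_add_const a).div_const N) 0
      fun y hy => by
        simpa using cantorMap_of_lt_half hN (by simpa using hy.1) (by simpa using hy.2),
    map_volume_restrict_half hΦ ((measurable_add_const b).div_const N) 1
      fun y hy => cantorMap_of_half_le hN hy.1 (by linarith [hy.2])]
  rfl

lemma cantorMeasure_Iic_of_le_node (hN : 1 < N) (hab : a < b) {t : ℝ} (ht : t ≤ node N a) :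
    cantorMeasure N a b (Iic t) = 0 := by
  have hΦ := measurable_cantorMap (a := a) (b := b) hN
  rw [cantorMeasure, Measure.map_apply hΦ measurableSet_Iic,
    Measure.restrict_apply (hΦ measurableSet_Iic)]
  refine measure_mono_null (fun y ⟨hyt, hy⟩ => ?_) (Real.volume_singleton (a := 0))
  by_contra hy₀
  exact (node_lt_cantorMap hN hab (hy.1.lt_of_ne (Ne.symm hy₀)) hy.2).not_ge (le_trans hyt ht)

lemma cantorMeasure_Iic_of_node_le (hN : 1 < N) (hab : a ≤ b) {t : ℝ} (ht : node N b ≤ t) :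
    cantorMeasure N a b (Iic t) = 1 := by
  rw [cantorMeasure, Measure.map_apply (measurable_cantorMap hN) measurableSet_Iic,
    eq_univ_of_forall (s := cantorMap N a b ⁻¹' Iic t) fun y =>
      (cantorMap_le_node hN hab y).trans ht]
  simp

lemma cantorMeasure_Iic_of_mem_middleGap (hN : 1 < N) (hab : a < b) {t : ℝ}
    (ht : t ∈ middleGap N a b) : cantorMeasure N a b (Iic t) = 2⁻¹ := by
  have hN₀ : 0 < N := zero_lt_one.trans hN
  have hpre : ∀ d, (fun s => (s + d) / N) ⁻¹' Iic t = Iic (N * t - d) := fun d => by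
    ext s; simp only [mem_preimage, mem_Iic, div_le_iff₀ hN₀]; constructor <;> intro <;> linarith
  have hb : node N b ≤ N * t - a := by linarith [(div_le_iff₀ hN₀).1 ht.1]
  have ha : N * t - b ≤ node N a := by linarith [(le_div_iff₀ hN₀).1 ht.2]
  rw [cantorMeasure_eq_average hN, Measure.add_apply, Measure.smul_apply, Measure.smul_apply,
    Measure.map_apply (by fun_prop) measurableSet_Iic, Measure.map_apply (by fun_prop)
    measurableSet_Iic, hpre, hpre, cantorMeasure_Iic_of_node_le hN hab.le hb,
    cantorMeasure_Iic_of_le_node hN hab ha]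
  simp

lemma cantorMeasure_Icc_zero_eq_Iic (hN : 1 < N) (hab : a < b) (ha : 0 ≤ a) (t : ℝ) :
    cantorMeasure N a b (Icc 0 t) = cantorMeasure N a b (Iic t) := by
  have h : cantorMeasure N a b (Iio 0) = 0 := measure_mono_null Iio_subset_Iic_self
    (cantorMeasure_Iic_of_le_node hN hab (node_nonneg hN ha))
  conv_rhs => rw [← measure_sdiff_null h]
  congr 1
  ext s
  simp [and_comm]

end CantorMeasure

lemma exists_equiv_of_pairwise_disjoint {ι κ α : Type*} [Fintype ι] [Fintype κ]
    {I : ι → Set α} (hI : Pairwise (Disjoint on I)) {x : κ → α}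
    (hcard : Fintype.card κ ≤ Fintype.card ι)
    (hx : ∀ i, ∃ n, x n ∈ I i) : ∃ σ : ι ≃ κ, ∀ i, x (σ i) ∈ I i := by
  choose σ hσ using hx
  have hinj : Injective σ := fun i j hij => by
    by_contra hne
    exact Set.disjoint_left.1 (hI hne) (hσ i) (by rw [hij]; exact hσ j)
  exact ⟨Equiv.ofBijective σ ((Fintype.bijective_iff_injective_and_card σ).2
    ⟨hinj, le_antisymm (Fintype.card_le_of_injective σ hinj) hcard⟩), hσ⟩

lemma exists_lonely_of_forall_exists_mem_Ioo {g : ℕ → ℝ} (hg : StrictMono g) {M k : ℕ}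
    (hk : 2 * k ≤ M + 2) {x : Fin k → ℝ} (hx : ∀ e ≤ M + 1, ∃ n, x n ∈ Ioo (g e) (g (e + 2))) :
    ∃ m, x m ∈ Ioo (g (M + 1)) (g (M + 2)) ∧ ∀ n ≠ m, x n ≤ g M := by
  -- each of the disjoint windows `(g (2 i), g (2 i + 2))`, `i ≤ M / 2`, holds exactly one sample
  have hf : Monotone fun i => g (2 * i) := fun i j h => hg.monotone (by omega)
  obtain ⟨σ, hσ⟩ := exists_equiv_of_pairwise_disjoint
    (hf.pairwise_disjoint_on_Ioo_succ.comp_of_injective (Fin.val_injective (n := M / 2 + 1)))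
    (by simp only [Fintype.card_fin]; omega) (x := x)
    fun i => by simpa [mul_add] using hx (2 * i) (by omega)
  set m := σ (Fin.last _)
  have hrest : ∀ n ≠ m, x n ≤ g M := by
    intro n hn
    obtain ⟨i, rfl⟩ := σ.surjective n
    have hi : (i : ℕ) < M / 2 := Fin.val_lt_last fun h => hn (by rw [h])
    exact (hσ i).2.le.trans (hg.monotone (by simp only [Order.succ_eq_add_one]; omega))
  have hm : x m < g (M + 2) :=
    (hσ _).2.trans_le (hg.monotone (by simp only [Fin.val_last, Order.succ_eq_add_one]; omega))
  obtain ⟨n, hn⟩ := hx (M + 1) le_rfl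
  have hnm : n = m := by
    by_contra h
    exact (hrest n h).not_gt ((hg (by omega)).trans hn.1)
  exact ⟨m, ⟨hnm ▸ hn.1, hm⟩, hrest⟩

def HasAgreeingCantorPair (N : ℕ) {k : ℕ} (x : Fin k → ℝ) : Prop :=
  ∃ a b a' b' : ℕ, a < b ∧ b < N ∧ a' < b' ∧ b' < N ∧
    (∃ t ∈ Icc (0 : ℝ) 1, cantorMeasure N a b (Iic t) ≠ cantorMeasure N a' b' (Iic t)) ∧
    ∀ n, cantorMeasure N a b (Iic (x n)) = cantorMeasure N a' b' (Iic (x n))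

section Cases

variable {N M e k : ℕ} {x : Fin k → ℝ}

lemma hasAgreeingCantorPair_of_forall_notMem_Ioo (he : e + 2 < N)
    (hx : ∀ n, x n ∉ Ioo (node N e) (node N ↑(e + 2))) : HasAgreeingCantorPair N x := by
  have hN2 : (2 : ℝ) ≤ N := by exact_mod_cast (by omega : 2 ≤ N)
  have hN : (1 : ℝ) < N := by linarith
  have hmono := strictMono_node hN
  refine ⟨e, e + 1, e, e + 2, by omega, by omega, by omega, he, ⟨node N ↑(e + 1),
    ⟨node_nonneg hN (by positivity), node_le_one hN ?_⟩, ?_⟩, fun n => ?_⟩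
  · have : ((e + 2 : ℕ) : ℝ) + 1 ≤ N := by exact_mod_cast he
    push_cast at this ⊢; linarith
  · rw [cantorMeasure_Iic_of_node_le hN (by simp) le_rfl,
      cantorMeasure_Iic_of_mem_middleGap hN (by simp)
        ⟨(add_node_div_le_node_iff hN).2 ?_, (node_le_add_node_div_iff hN).2 ?_⟩]
    · exact (by simp [ENNReal.inv_eq_one] : (2 : ℝ≥0∞)⁻¹ ≠ 1).symm
    all_goals push_cast; linarith
  rcases le_or_gt (x n) (node N e) with h | h
  · rw [cantorMeasure_Iic_of_le_node hN (by simp) h,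
      cantorMeasure_Iic_of_le_node hN (by simp) h]
  · have h' : node N ↑(e + 2) ≤ x n := not_lt.1 fun h' => hx n ⟨h, h'⟩
    rw [cantorMeasure_Iic_of_node_le hN (by simp)
        ((hmono (by omega : e + 1 < e + 2)).le.trans h'),
      cantorMeasure_Iic_of_node_le hN (by simp) h']

lemma hasAgreeingCantorPair_of_lonely_of_ge {m : Fin k}
    (hm : x m ∈ Ioo (node ↑(M + 4) ↑(M + 1)) (node ↑(M + 4) ↑(M + 2)))
    (hp : (↑(M + 1) + node ↑(M + 4) ↑(M + 3)) / ↑(M + 4) ≤ x m)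
    (hrest : ∀ n ≠ m, x n ≤ node ↑(M + 4) M) : HasAgreeingCantorPair (M + 4) x := by
  have hM : (0 : ℝ) ≤ M := M.cast_nonneg
  have hN : (1 : ℝ) < ↑(M + 4) := by push_cast; linarith
  have hmono := strictMono_node hN
  have hlo : (↑M + node ↑(M + 4) ↑(M + 3)) / ↑(M + 4) ≤ node ↑(M + 4) ↑(M + 1) :=
    (add_node_div_le_node_iff hN).2 (by push_cast; nlinarith)
  have hhi : ∀ a : ℕ, M ≤ a →
      node ↑(M + 4) ↑(M + 2) ≤ (↑(M + 3) + node ↑(M + 4) a) / ↑(M + 4) :=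
    fun a ha => (node_le_add_node_div_iff hN).2 <| by
      have : (M : ℝ) ≤ a := by exact_mod_cast ha
      push_cast; nlinarith
  refine ⟨M + 1, M + 3, M, M + 3, by omega, by omega, by omega, by omega,
    ⟨node ↑(M + 4) ↑(M + 1),
      ⟨node_nonneg hN (by positivity), node_le_one hN (by push_cast; linarith)⟩, ?_⟩,
    fun n => ?_⟩
  · rw [cantorMeasure_Iic_of_le_node hN (by simp) le_rfl,
      cantorMeasure_Iic_of_mem_middleGap hN (by simp)
        ⟨hlo, (hmono (by omega)).le.trans (hhi M le_rfl)⟩]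
    exact (ENNReal.inv_ne_zero.2 (by norm_num)).symm
  by_cases hn : n = m
  · subst hn
    rw [cantorMeasure_Iic_of_mem_middleGap hN (by simp) ⟨hp, hm.2.le.trans (hhi _ (by omega))⟩,
      cantorMeasure_Iic_of_mem_middleGap hN (by simp)
        ⟨hlo.trans hm.1.le, hm.2.le.trans (hhi M le_rfl)⟩]
  · rw [cantorMeasure_Iic_of_le_node hN (by simp) ((hrest n hn).trans (hmono (by omega)).le),
      cantorMeasure_Iic_of_le_node hN (by simp) (hrest n hn)]

lemma hasAgreeingCantorPair_of_lonely_of_lt {m : Fin k}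
    (hm : x m ∈ Ioo (node ↑(M + 4) ↑(M + 1)) (node ↑(M + 4) ↑(M + 2)))
    (hp : x m < (↑(M + 1) + node ↑(M + 4) ↑(M + 3)) / ↑(M + 4))
    (hrest : ∀ n ≠ m, x n ≤ node ↑(M + 4) M) : HasAgreeingCantorPair (M + 4) x := by
  have hM : (0 : ℝ) ≤ M := M.cast_nonneg
  have hN : (1 : ℝ) < ↑(M + 4) := by push_cast; linarith
  have hlo : ∀ b : ℕ, b ≤ M + 3 →
      (↑M + node ↑(M + 4) b) / ↑(M + 4) ≤ node ↑(M + 4) ↑(M + 1) :=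
    fun b hb => (add_node_div_le_node_iff hN).2 <| by
      have : (b : ℝ) ≤ M + 3 := by exact_mod_cast hb
      push_cast; nlinarith
  have hhi : ∀ b : ℕ, M + 2 ≤ b →
      (↑(M + 1) + node ↑(M + 4) ↑(M + 3)) / ↑(M + 4) ≤ (↑b + node ↑(M + 4) M) / ↑(M + 4) := by
    intro b hb
    have := node_le_one hN (a := ↑(M + 3)) (by push_cast; linarith)
    have := node_nonneg hN hM
    have : ((M + 1 : ℕ) : ℝ) + 1 ≤ b := by exact_mod_cast (by omega : M + 1 + 1 ≤ b)
    exact div_le_div_of_nonneg_right (by linarith) (by positivity)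
  refine ⟨M, M + 2, M, M + 3, by omega, by omega, by omega, by omega,
    ⟨node ↑(M + 4) ↑(M + 2),
      ⟨node_nonneg hN (by positivity), node_le_one hN (by push_cast; linarith)⟩, ?_⟩,
    fun n => ?_⟩
  · rw [cantorMeasure_Iic_of_node_le hN (by simp) le_rfl,
      cantorMeasure_Iic_of_mem_middleGap hN (by simp) ⟨(add_node_div_le_node_iff hN).2
        (by push_cast; nlinarith), (node_le_add_node_div_iff hN).2 (by push_cast; nlinarith)⟩]
    exact (by simp [ENNReal.inv_eq_one] : (2 : ℝ≥0∞)⁻¹ ≠ 1).symm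
  by_cases hn : n = m
  · subst hn
    rw [cantorMeasure_Iic_of_mem_middleGap hN (by simp)
        ⟨(hlo _ (by omega)).trans hm.1.le, hp.le.trans (hhi _ le_rfl)⟩,
      cantorMeasure_Iic_of_mem_middleGap hN (by simp)
        ⟨(hlo _ (by omega)).trans hm.1.le, hp.le.trans (hhi _ (by omega))⟩]
  · rw [cantorMeasure_Iic_of_le_node hN (by simp) (hrest n hn),
      cantorMeasure_Iic_of_le_node hN (by simp) (hrest n hn)]

end Cases

lemma hasAgreeingCantorPair_of_lt_half {N k : ℕ} (hN : 4 ≤ N) (hk : k < N / 2) (x : Fin k → ℝ) :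
    HasAgreeingCantorPair N x := by
  obtain ⟨M, rfl⟩ : ∃ M, N = M + 4 := ⟨N - 4, by omega⟩
  have hN₁ : (1 : ℝ) < ↑(M + 4) := by push_cast; linarith [M.cast_nonneg (α := ℝ)]
  by_cases hfree : ∃ e ≤ M + 1, ∀ n, x n ∉ Ioo (node ↑(M + 4) e) (node ↑(M + 4) ↑(e + 2))
  · obtain ⟨e, he, hfree⟩ := hfree
    exact hasAgreeingCantorPair_of_forall_notMem_Ioo (by omega) hfree
  push Not at hfree
  obtain ⟨m, hm, hrest⟩ :=
    exists_lonely_of_forall_exists_mem_Ioo (strictMono_node hN₁) (by omega) hfree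
  rcases le_or_gt ((↑(M + 1) + node ↑(M + 4) ↑(M + 3)) / ↑(M + 4)) (x m) with hp | hp
  · exact hasAgreeingCantorPair_of_lonely_of_ge hm hp hrest
  · exact hasAgreeingCantorPair_of_lonely_of_lt hm hp hrest

lemma cantorMeasure_eq_average_pair {N : ℝ} (hN : 1 < N) {a b : ℕ} (hab : a ≠ b) :
    cantorMeasure N a b = (({a, b} : Finset ℕ).card : ℝ≥0∞)⁻¹ •
      ∑ d ∈ {a, b}, (cantorMeasure N a b).map (fun t => (t + d) / N) := by
  rw [Finset.card_pair hab, Finset.sum_pair hab, smul_add, Nat.cast_ofNat]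
  exact cantorMeasure_eq_average hN

end TwoDigitCantor

open TwoDigitCantor in
theorem no_uniqueness_with_fewer_than_half_samples_general
    (N : ℕ) (hN : 4 ≤ N)
    (k : ℕ) (hk : k < N / 2)
    (x : Fin k → ℝ) :
    ∃ (D E : Finset ℕ) (μ ν : Measure ℝ),
      D ⊆ Finset.range N ∧ 2 ≤ D.card ∧ D.card ≤ N - 1 ∧
      E ⊆ Finset.range N ∧ 2 ≤ E.card ∧ E.card ≤ N - 1 ∧
      IsProbabilityMeasure μ ∧ IsProbabilityMeasure ν ∧
      μ (Set.Icc 0 1) = 1 ∧ ν (Set.Icc 0 1) = 1 ∧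
      μ = (D.card : ℝ≥0∞)⁻¹ • ∑ d ∈ D, μ.map (fun t : ℝ => (t + (d : ℝ)) / N) ∧
      ν = (E.card : ℝ≥0∞)⁻¹ • ∑ d ∈ E, ν.map (fun t : ℝ => (t + (d : ℝ)) / N) ∧
      (∃ t ∈ Set.Icc (0:ℝ) 1,
        (μ (Set.Icc 0 t)).toReal ≠ (ν (Set.Icc 0 t)).toReal) ∧
      (∀ n, (μ (Set.Icc 0 (x n))).toReal = (ν (Set.Icc 0 (x n))).toReal) := by
  obtain ⟨a, b, a', b', hab, hb, hab', hb', ⟨t, ht, hne⟩, hagree⟩ :=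
    hasAgreeingCantorPair_of_lt_half hN hk x
  have hN' : (1 : ℝ) < N := by exact_mod_cast (by omega : 1 < N)
  have := isProbabilityMeasure_cantorMeasure (a := a) (b := b) hN'
  have := isProbabilityMeasure_cantorMeasure (a := a') (b := b') hN'
  have hIcc : ∀ {c d : ℕ}, c < d → ∀ s,
      cantorMeasure N c d (Icc 0 s) = cantorMeasure N c d (Iic s) :=
    fun hcd => cantorMeasure_Icc_zero_eq_Iic hN' (by exact_mod_cast hcd) (Nat.cast_nonneg _)
  have hone : ∀ {c d : ℕ}, c < d → d < N → cantorMeasure N c d (Icc 0 1) = 1 := by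
    intro c d hcd hd
    have : ((d + 1 : ℕ) : ℝ) ≤ N := by exact_mod_cast hd
    rw [hIcc hcd, cantorMeasure_Iic_of_node_le hN' (by exact_mod_cast hcd.le)
      (node_le_one hN' (by push_cast at this; linarith))]
  refine ⟨{a, b}, {a', b'}, cantorMeasure N a b, cantorMeasure N a' b',
    ?_, by rw [Finset.card_pair hab.ne], by rw [Finset.card_pair hab.ne]; omega,
    ?_, by rw [Finset.card_pair hab'.ne], by rw [Finset.card_pair hab'.ne]; omega,
    inferInstance, inferInstance, hone hab hb, hone hab' hb',
    cantorMeasure_eq_average_pair hN' hab.ne, cantorMeasure_eq_average_pair hN' hab'.ne,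
    ⟨t, ht, ?_⟩, fun n => by rw [hIcc hab, hIcc hab', hagree n]⟩
  · simp only [Finset.insert_subset_iff, Finset.mem_range, Finset.singleton_subset_iff]; omega
  · simp only [Finset.insert_subset_iff, Finset.mem_range, Finset.singleton_subset_iff]; omega
  · rwa [hIcc hab, hIcc hab', Ne, ENNReal.toReal_eq_toReal_iff' (measure_ne_top _ _)
      (measure_ne_top _ _)]

theorem no_uniqueness_with_fewer_than_half_samples
    (N : ℕ) (hN : 4 ≤ N)
    (k : ℕ) (hk : k < N / 2)
    (x : Fin k → ℝ) (hx : ∀ n, x n ∈ Set.Icc (0:ℝ) 1)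
    (hmono : ∀ m n : Fin k, m ≤ n → x m ≤ x n) :
    ∃ (D E : Finset ℕ) (μ ν : Measure ℝ),
      D ⊆ Finset.range N ∧ 2 ≤ D.card ∧ D.card ≤ N - 1 ∧
      E ⊆ Finset.range N ∧ 2 ≤ E.card ∧ E.card ≤ N - 1 ∧
      IsProbabilityMeasure μ ∧ IsProbabilityMeasure ν ∧
      μ (Set.Icc 0 1) = 1 ∧ ν (Set.Icc 0 1) = 1 ∧
      μ = (D.card : ℝ≥0∞)⁻¹ • ∑ d ∈ D, μ.map (fun t : ℝ => (t + (d : ℝ)) / N) ∧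
      ν = (E.card : ℝ≥0∞)⁻¹ • ∑ d ∈ E, ν.map (fun t : ℝ => (t + (d : ℝ)) / N) ∧
      (∃ t ∈ Set.Icc (0:ℝ) 1,
        (μ (Set.Icc 0 t)).toReal ≠ (ν (Set.Icc 0 t)).toReal) ∧
      (∀ n, (μ (Set.Icc 0 (x n))).toReal = (ν (Set.Icc 0 (x n))).toReal) :=
  no_uniqueness_with_fewer_than_half_samples_general N hN k hk x
end

section
/- The CDF of the reversed digit set satisfies the symmetry F_{B̌}(x) = 1 - F_B(1 - x) for all x ∈ [0,1], where B̌ is the reversal of B, i.e., B̌(n) = B(N-1-n). -/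
/-!
The reflection `r x = 1 - x` conjugates `x ↦ (x + d) / N` to `x ↦ (x + (N - 1 - d)) / N`, so
`r` carries the invariant measure `μ` of `D` to an invariant measure of the reversed digit set,
supported in `[0, 1]`; by uniqueness it is `ν`. Then `ν [0, x] = μ [1 - x, 1] = 1 - μ [0, 1 - x]`,
the last step because `μ` has no atoms.

Uniqueness: the difference `H` of the CDFs of two invariant probability measures supported in
`[0, 1]` is integrable and satisfies `H y = |D|⁻¹ ∑_{d ∈ D} H (N y - d)`; integrating `|H|` gives
`‖H‖₁ ≤ N⁻¹ ‖H‖₁`, so `H = 0` almost everywhere, hence everywhere by right continuity.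

No atoms: iterating `μ {q} = |D|⁻¹ ∑_{d ∈ D} μ {N q - d}` bounds `μ {q}` by `|D|⁻ⁿ` times the mass
of a finite set of points `Nⁿ q - c`, which are distinct because the integers `c` are base-`N`
expansions with digits in `D`.
-/

open MeasureTheory Set ProbabilityTheory
open scoped ENNReal

noncomputable def digitHutchinson (N : ℕ) (D : Finset ℕ) (μ : Measure ℝ) : Measure ℝ :=
  (D.card : ℝ≥0∞)⁻¹ • ∑ d ∈ D, μ.map (fun x : ℝ => (x + (d : ℝ)) / N)

section Hutchinson

variable {N : ℕ} {D : Finset ℕ} {μ : Measure ℝ}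

lemma measurable_add_div (N d : ℕ) : Measurable (fun x : ℝ => (x + (d : ℝ)) / N) :=
  (measurable_id.add_const _).div_const _

lemma digitHutchinson_apply {s : Set ℝ} (hs : MeasurableSet s) :
    digitHutchinson N D μ s =
      (D.card : ℝ≥0∞)⁻¹ * ∑ d ∈ D, μ ((fun x : ℝ => (x + (d : ℝ)) / N) ⁻¹' s) := by
  simp only [digitHutchinson, Measure.smul_apply, Measure.finsetSum_apply, smul_eq_mul,
    Measure.map_apply (measurable_add_div N _) hs]

lemma preimage_add_div_singleton (hN : N ≠ 0) (d : ℕ) (y : ℝ) :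
    (fun x : ℝ => (x + (d : ℝ)) / N) ⁻¹' {y} = {(N : ℝ) * y - d} := by
  ext x
  simp only [mem_preimage, mem_singleton_iff, div_eq_iff (Nat.cast_ne_zero (R := ℝ) |>.2 hN)]
  constructor <;> intro h <;> linarith

lemma preimage_add_div_Iic (hN : N ≠ 0) (d : ℕ) (y : ℝ) :
    (fun x : ℝ => (x + (d : ℝ)) / N) ⁻¹' Iic y = Iic ((N : ℝ) * y - d) := by
  have hN' : (0 : ℝ) < N := Nat.cast_pos.2 (Nat.pos_of_ne_zero hN)
  ext x
  simp only [mem_preimage, mem_Iic, div_le_iff₀ hN']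
  constructor <;> intro h <;> linarith

lemma map_one_sub_digitHutchinson (hD : D ⊆ Finset.range N) (μ : Measure ℝ) :
    (digitHutchinson N D μ).map (fun x => 1 - x) =
      digitHutchinson N (D.image fun d => N - 1 - d) (μ.map fun x => 1 - x) := by
  have hlt : ∀ d ∈ D, d < N := fun d hd => Finset.mem_range.1 (hD hd)
  have hinj : InjOn (fun d => N - 1 - d) D := fun a ha b hb hab => by
    have := hlt a ha; have := hlt b hb; simp only at hab; omega
  have hmeas : Measurable fun x : ℝ => 1 - x := measurable_const.sub measurable_id
  rw [digitHutchinson, digitHutchinson, Measure.map_smul,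
    Measure.map_finset_sum hmeas.aemeasurable, Finset.card_image_of_injOn hinj,
    Finset.sum_image hinj]
  congr 1
  refine Finset.sum_congr rfl fun d hd => ?_
  rw [Measure.map_map hmeas (measurable_add_div N d),
    Measure.map_map (measurable_add_div N _) hmeas]
  congr 1
  have hN : (N : ℝ) ≠ 0 := Nat.cast_ne_zero.2 (by have := hlt d hd; omega)
  funext x
  simp only [Function.comp_apply, Nat.cast_sub (Nat.le_sub_one_of_lt (hlt d hd)),
    Nat.cast_sub (Nat.one_le_of_lt (hlt d hd)), Nat.cast_one]
  field_simp
  ring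

lemma measure_singleton_eq_of_isFixedPt (hN : N ≠ 0)
    (hμ : Function.IsFixedPt (digitHutchinson N D) μ) (y : ℝ) :
    μ {y} = (D.card : ℝ≥0∞)⁻¹ * ∑ d ∈ D, μ {(N : ℝ) * y - d} := by
  conv_lhs => rw [← hμ]
  simp only [digitHutchinson_apply (measurableSet_singleton y), preimage_add_div_singleton hN]

lemma exists_measure_singleton_le_sum (hN : N ≠ 0) (hD : D ⊆ Finset.range N)
    (hμ : Function.IsFixedPt (digitHutchinson N D) μ) (q : ℝ) (n : ℕ) :
    ∃ C : Finset ℕ,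
      μ {q} ≤ (D.card : ℝ≥0∞)⁻¹ ^ n * ∑ c ∈ C, μ {(N : ℝ) ^ n * q - c} := by
  induction n with
  | zero => exact ⟨{0}, by simp⟩
  | succ n ih =>
    obtain ⟨C, hC⟩ := ih
    have hlt : ∀ d ∈ D, d < N := fun d hd => Finset.mem_range.1 (hD hd)
    have hinj : InjOn (fun p : ℕ × ℕ => N * p.1 + p.2) (C ×ˢ D : Finset (ℕ × ℕ)) := by
      rw [Finset.coe_product]
      rintro ⟨c, d⟩ ⟨-, hd⟩ ⟨c', d'⟩ ⟨-, hd'⟩ h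
      replace hd := hlt d hd
      replace hd' := hlt d' hd'
      simp only at h
      have hc : c = c' := by
        simpa [Nat.mul_add_div (by omega : 0 < N), Nat.div_eq_of_lt hd,
          Nat.div_eq_of_lt hd'] using congrArg (· / N) h
      subst hc
      simp_all
    refine ⟨(C ×ˢ D).image fun p => N * p.1 + p.2, hC.trans_eq ?_⟩
    rw [Finset.sum_image hinj, Finset.sum_product, pow_succ, mul_assoc,
      Finset.mul_sum _ _ (D.card : ℝ≥0∞)⁻¹]
    congr 1
    refine Finset.sum_congr rfl fun c _ => ?_
    rw [measure_singleton_eq_of_isFixedPt hN hμ]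
    congr 1
    refine Finset.sum_congr rfl fun d _ => ?_
    congr 2
    push_cast
    ring

theorem nullSingletonClass_of_isFixedPt [IsFiniteMeasure μ] (hD : D ⊆ Finset.range N)
    (hcard : 2 ≤ D.card) (hμ : Function.IsFixedPt (digitHutchinson N D) μ) :
    NullSingletonClass μ := by
  have hN : N ≠ 0 := by
    rintro rfl
    simp [Finset.subset_empty.1 hD] at hcard
  refine ⟨fun q => ?_⟩
  have hbound : ∀ n : ℕ, μ {q} ≤ (D.card : ℝ≥0∞)⁻¹ ^ n * μ univ := fun n => by
    obtain ⟨C, hC⟩ := exists_measure_singleton_le_sum hN hD hμ q n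
    have hinj : InjOn (fun c : ℕ => (N : ℝ) ^ n * q - c) C :=
      fun a _ b _ h => Nat.cast_injective (sub_right_injective h)
    rw [← Finset.sum_image (f := fun y => μ {y}) hinj, sum_measure_singleton] at hC
    exact hC.trans (mul_le_mul_right (measure_mono (subset_univ _)) _)
  have hlt : (D.card : ℝ≥0∞)⁻¹ < 1 := ENNReal.inv_lt_one.2 (by exact_mod_cast hcard)
  have hlim := ENNReal.Tendsto.mul_const (ENNReal.tendsto_pow_atTop_nhds_zero_of_lt_one hlt)
    (Or.inr (measure_ne_top μ univ))
  rw [zero_mul] at hlim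
  exact le_antisymm (ge_of_tendsto' hlim hbound) zero_le

end Hutchinson

section CDF

variable {N : ℕ} {D : Finset ℕ} {μ : Measure ℝ} [IsProbabilityMeasure μ]

lemma cdf_eq_of_isFixedPt (hN : N ≠ 0) (hμ : Function.IsFixedPt (digitHutchinson N D) μ)
    (y : ℝ) : cdf μ y = (D.card : ℝ)⁻¹ * ∑ d ∈ D, cdf μ ((N : ℝ) * y - d) := by
  simp only [cdf_eq_real, measureReal_def]
  conv_lhs => rw [← hμ]
  rw [digitHutchinson_apply measurableSet_Iic, ENNReal.toReal_mul, ENNReal.toReal_inv,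
    ENNReal.toReal_sum fun d _ => measure_ne_top μ _]
  simp only [preimage_add_div_Iic hN, ENNReal.toReal_natCast]

lemma cdf_eq_zero_of_neg (hμ : μ (Icc 0 1) = 1) {y : ℝ} (hy : y < 0) : cdf μ y = 0 := by
  rw [cdf_eq_real, measureReal_eq_zero_iff]
  refine measure_mono_null (fun x hx => ?_) ((prob_compl_eq_zero_iff measurableSet_Icc).2 hμ)
  exact fun h => (mem_Iic.1 hx).not_gt (hy.trans_le h.1)

lemma cdf_eq_one_of_one_le (hμ : μ (Icc 0 1) = 1) {y : ℝ} (hy : 1 ≤ y) : cdf μ y = 1 := by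
  refine (cdf_le_one μ y).antisymm ?_
  rw [cdf_eq_real, ← ENNReal.toReal_one, ← hμ]
  exact measureReal_mono fun x hx => mem_Iic.2 (hx.2.trans hy)

end CDF

theorem eq_of_ae_eq_of_continuousWithinAt_Ici {α E : Type*} [TopologicalSpace α] [LinearOrder α]
    [OrderTopology α] [DenselyOrdered α] [NoMaxOrder α] [MeasurableSpace α]
    [TopologicalSpace E] [T2Space E] (μ : Measure α) [μ.IsOpenPosMeasure] {f g : α → E}
    (hfg : f =ᵐ[μ] g) (hf : ∀ x, ContinuousWithinAt f (Ici x) x)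
    (hg : ∀ x, ContinuousWithinAt g (Ici x) x) : f = g := by
  funext x
  have hx : x ∈ closure (Ioi x ∩ {y | f y = g y}) :=
    closure_minimal ((Measure.dense_of_ae hfg).open_subset_closure_inter isOpen_Ioi)
      isClosed_closure (by rw [closure_Ioi]; exact mem_Ici.2 le_rfl)
  have := mem_closure_iff_nhdsWithin_neBot.1 hx
  have hsub : Ioi x ∩ {y | f y = g y} ⊆ Ici x := fun y hy => le_of_lt hy.1
  refine tendsto_nhds_unique ((hf x).mono hsub) (((hg x).mono hsub).congr' ?_)
  filter_upwards [self_mem_nhdsWithin] with y hy using hy.2.symm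

-- The substitution `y ↦ c * y - t` scales the integral of `|H|` by `c⁻¹ < 1`.
theorem ae_eq_zero_of_abs_le_average_comp {ι : Type*} (s : Finset ι) {c : ℝ} (hc : 1 < c)
    (t : ι → ℝ) {H : ℝ → ℝ} (hH : Integrable H)
    (h : ∀ y, |H y| ≤ (s.card : ℝ)⁻¹ * ∑ i ∈ s, |H (c * y - t i)|) :
    H =ᵐ[volume] 0 := by
  set I := ∫ y, |H y|
  have hI : 0 ≤ I := integral_nonneg fun y => abs_nonneg _
  have hcomp_int : ∀ i, Integrable fun y => |H (c * y - t i)| := fun i =>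
    (hH.abs.comp_sub_right (t i)).comp_mul_left' (by positivity)
  have hcomp : ∀ i, ∫ y, |H (c * y - t i)| = c⁻¹ * I := fun i => by
    rw [Measure.integral_comp_mul_left (fun z => |H (z - t i)|), integral_sub_right_eq_self
      (fun z => |H z|), abs_of_pos (by positivity), smul_eq_mul]
  have hle : I ≤ c⁻¹ * I := calc
    I ≤ ∫ y, (s.card : ℝ)⁻¹ * ∑ i ∈ s, |H (c * y - t i)| :=
      integral_mono hH.abs ((integrable_finsetSum s fun i _ => hcomp_int i).const_mul _) h
    _ = (s.card : ℝ)⁻¹ * s.card * (c⁻¹ * I) := by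
      rw [integral_const_mul, integral_finsetSum s fun i _ => hcomp_int i,
        Finset.sum_congr rfl fun i _ => hcomp i, Finset.sum_const, nsmul_eq_mul, mul_assoc]
    _ ≤ c⁻¹ * I := by
      rcases eq_or_ne (s.card : ℝ) 0 with h0 | h0
      · rw [h0, inv_zero, zero_mul, zero_mul]
        positivity
      · rw [inv_mul_cancel₀ h0, one_mul]
  have hI0 : I = 0 := by
    have : c⁻¹ < 1 := inv_lt_one_of_one_lt₀ hc
    nlinarith
  have habs := (integral_eq_zero_iff_of_nonneg (fun y => abs_nonneg (H y)) hH.abs).1 hI0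
  filter_upwards [habs] with y hy
  exact abs_eq_zero.1 hy

theorem eq_of_isFixedPt_digitHutchinson {N : ℕ} {D : Finset ℕ} (hN : 2 ≤ N)
    {μ ν : Measure ℝ} [IsProbabilityMeasure μ] [IsProbabilityMeasure ν] (hμ1 : μ (Icc 0 1) = 1)
    (hν1 : ν (Icc 0 1) = 1) (hμ : Function.IsFixedPt (digitHutchinson N D) μ)
    (hν : Function.IsFixedPt (digitHutchinson N D) ν) : μ = ν := by
  set H : ℝ → ℝ := fun y => cdf μ y - cdf ν y
  have hH : ∀ y, H y = (D.card : ℝ)⁻¹ * ∑ d ∈ D, H ((N : ℝ) * y - d) := fun y => by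
    simp only [H, cdf_eq_of_isFixedPt (by omega) hμ y, cdf_eq_of_isFixedPt (by omega) hν y,
      Finset.sum_sub_distrib, mul_sub]
  have hsupp : Function.support H ⊆ Icc 0 1 := Function.support_subset_iff'.2 fun y hy => by
    rcases not_and_or.1 hy with h0 | h1
    · simp only [H, cdf_eq_zero_of_neg hμ1 (not_le.1 h0), cdf_eq_zero_of_neg hν1 (not_le.1 h0),
        sub_self]
    · simp only [H, cdf_eq_one_of_one_le hμ1 (not_le.1 h1).le,
        cdf_eq_one_of_one_le hν1 (not_le.1 h1).le, sub_self]
  have hint : Integrable H := (integrableOn_iff_integrable_of_support_subset hsupp).1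
    (((cdf μ).mono.monotoneOn _).integrableOn_isCompact isCompact_Icc |>.sub
      (((cdf ν).mono.monotoneOn _).integrableOn_isCompact isCompact_Icc))
  have hae : H =ᵐ[volume] 0 :=
    ae_eq_zero_of_abs_le_average_comp D (c := N) (by exact_mod_cast hN) (fun d => d) hint
      fun y => by
        have hm : (0 : ℝ) ≤ (D.card : ℝ)⁻¹ := inv_nonneg.2 (Nat.cast_nonneg _)
        rw [hH y, abs_mul, abs_of_nonneg hm]
        exact mul_le_mul_of_nonneg_left (Finset.abs_sum_le_sum_abs _ _) hm
  have hcdf := eq_of_ae_eq_of_continuousWithinAt_Ici volume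
    (hae.mono fun y hy => sub_eq_zero.1 hy) (cdf μ).right_continuous (cdf ν).right_continuous
  exact Measure.eq_of_cdf μ ν (StieltjesFunction.ext (congrFun hcdf))

lemma measureReal_Icc_eq_one_sub {μ : Measure ℝ} [IsFiniteMeasure μ] [NullSingletonClass μ]
    (hμ : μ (Icc 0 1) = 1) {t : ℝ} (ht0 : 0 ≤ t) (ht1 : t ≤ 1) :
    μ.real (Icc t 1) = 1 - μ.real (Icc 0 t) := by
  have := measureReal_union_add_inter (μ := μ) (s := Icc 0 t) (measurableSet_Icc (a := t) (b := 1))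
  rw [Icc_union_Icc_eq_Icc ht0 ht1, Icc_inter_Icc_eq_singleton ht0 ht1, measureReal_def,
    measureReal_def μ {t}, hμ, measure_singleton, ENNReal.toReal_one, ENNReal.toReal_zero] at this
  linarith

theorem cantor_cdf_reversal_symmetry_general
    (N : ℕ) (D : Finset ℕ) (hD : D ⊆ Finset.range N)
    (hcard : 2 ≤ D.card)
    (μ ν : Measure ℝ) [IsProbabilityMeasure μ] [IsProbabilityMeasure ν]
    (hμsupp : μ (Set.Icc 0 1) = 1)
    (hμinv : μ = (D.card : ℝ≥0∞)⁻¹ • ∑ d ∈ D, μ.map (fun x : ℝ => (x + (d : ℝ)) / N))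
    -- ν is the invariant measure of the reversed digit set Ď = {N - 1 - d : d ∈ D}
    (hνsupp : ν (Set.Icc 0 1) = 1)
    (hνinv : ν = ((D.image (fun d => N - 1 - d)).card : ℝ≥0∞)⁻¹ •
        ∑ d ∈ D.image (fun d => N - 1 - d), ν.map (fun x : ℝ => (x + (d : ℝ)) / N)) :
    ∀ x ∈ Set.Icc (0:ℝ) 1,
      (ν (Set.Icc 0 x)).toReal = 1 - (μ (Set.Icc 0 (1 - x))).toReal := by
  have hN : 2 ≤ N := hcard.trans (by simpa using Finset.card_le_card hD)
  have hr : Measurable fun x : ℝ => 1 - x := measurable_const.sub measurable_id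
  have hμfix : Function.IsFixedPt (digitHutchinson N D) μ := hμinv.symm
  have := nullSingletonClass_of_isFixedPt hD hcard hμfix
  have := Measure.isProbabilityMeasure_map (μ := μ) hr.aemeasurable
  have hμr : (μ.map fun x => 1 - x) (Icc 0 1) = 1 := by
    rw [Measure.map_apply hr measurableSet_Icc, preimage_const_sub_Icc, sub_zero, sub_self, hμsupp]
  have hνμ : ν = μ.map fun x => 1 - x := eq_of_isFixedPt_digitHutchinson hN hνsupp hμr
    hνinv.symm (by rw [Function.IsFixedPt, ← map_one_sub_digitHutchinson hD, hμfix.eq])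
  rintro x ⟨hx0, hx1⟩
  rw [hνμ, Measure.map_apply hr measurableSet_Icc, preimage_const_sub_Icc, sub_zero]
  exact measureReal_Icc_eq_one_sub hμsupp (by linarith) (by linarith)

theorem cantor_cdf_reversal_symmetry
    (N : ℕ) (hN : 3 ≤ N) (D : Finset ℕ) (hD : D ⊆ Finset.range N)
    (hcard : 2 ≤ D.card) (hcard' : D.card ≤ N - 1)
    (μ ν : Measure ℝ) [IsProbabilityMeasure μ] [IsProbabilityMeasure ν]
    (hμsupp : μ (Set.Icc 0 1) = 1)
    (hμinv : μ = (D.card : ℝ≥0∞)⁻¹ • ∑ d ∈ D, μ.map (fun x : ℝ => (x + (d : ℝ)) / N))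
    -- ν is the invariant measure of the reversed digit set Ď = {N - 1 - d : d ∈ D}
    (hνsupp : ν (Set.Icc 0 1) = 1)
    (hνinv : ν = ((D.image (fun d => N - 1 - d)).card : ℝ≥0∞)⁻¹ •
        ∑ d ∈ D.image (fun d => N - 1 - d), ν.map (fun x : ℝ => (x + (d : ℝ)) / N)) :
    ∀ x ∈ Set.Icc (0:ℝ) 1,
      (ν (Set.Icc 0 x)).toReal = 1 - (μ (Set.Icc 0 (1 - x))).toReal :=
  cantor_cdf_reversal_symmetry_general N D hD hcard μ ν hμsupp hμinv hνsupp hνinv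
end

section
/- The Cantor CDF maps rationals to rationals: if x ∈ ℚ ∩ [0,1], then F_B(x) ∈ ℚ. -/
open MeasureTheory Set
open scoped ENNReal Finset

/-!
Write `F x = μ [0, x]`. Self-similarity of `μ` gives, for `x ≥ 0`,
`F x = (#{d ∈ D | d + 1 ≤ N x} + [⌊N x⌋ ∈ D] · F {N x}) / #D`,
an affine relation `F x = a + b · F (T x)` with `T x = {N x}`, `a` rational and `b ∈ {0, 1/#D}`.
The `T`-orbit of a rational with denominator `m` stays among the fractions `k / m`, so it is
eventually periodic. At a periodic point `y` the iterated relation reads `F y = A + B · F y`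
with `|B| < 1`, hence `F y` is rational, and the relation carries rationality back along the
preperiod.
-/

section AffineRecursion

variable {α : Type*} {T : α → α} {F : α → ℝ} {s : Set α}

theorem exists_rat_affine_iterate (hT : MapsTo T s s)
    (hF : ∀ x ∈ s, ∃ a b : ℚ, |b| < 1 ∧ F x = a + b * F (T x)) {x : α} (hx : x ∈ s) (n : ℕ) :
    ∃ A B : ℚ, |B| < 1 ∧ F x = A + B * F (T^[n + 1] x) := by
  induction n with
  | zero => simpa using hF x hx
  | succ n ih =>
    obtain ⟨A, B, hB, hA⟩ := ih
    obtain ⟨a, b, hb, ha⟩ := hF _ (hT.iterate (n + 1) hx)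
    refine ⟨A + B * a, B * b, ?_, ?_⟩
    · rw [abs_mul]
      exact mul_lt_one_of_nonneg_of_lt_one_left (abs_nonneg _) hB hb.le
    · rw [Function.iterate_succ_apply' T (n + 1), hA, ha]
      push_cast
      ring

theorem exists_rat_eq_of_isPeriodicPt (hT : MapsTo T s s)
    (hF : ∀ x ∈ s, ∃ a b : ℚ, |b| < 1 ∧ F x = a + b * F (T x)) {x : α} (hx : x ∈ s)
    {n : ℕ} (hn : 0 < n) (hper : Function.IsPeriodicPt T n x) : ∃ r : ℚ, F x = r := by
  obtain ⟨m, rfl⟩ := Nat.exists_eq_add_one_of_ne_zero hn.ne'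
  obtain ⟨A, B, hB, hA⟩ := exists_rat_affine_iterate hT hF hx m
  rw [hper.eq] at hA
  have hB1 : (B : ℝ) < 1 := by exact_mod_cast (abs_lt.mp hB).2
  refine ⟨A / (1 - B), ?_⟩
  rw [Rat.cast_div, Rat.cast_sub, Rat.cast_one, eq_div_iff (by linarith)]
  linarith

theorem exists_rat_eq_of_exists_rat_eq_iterate (hT : MapsTo T s s)
    (hF : ∀ x ∈ s, ∃ a b : ℚ, F x = a + b * F (T x)) {x : α} (hx : x ∈ s) (m : ℕ)
    (hm : ∃ r : ℚ, F (T^[m] x) = r) : ∃ r : ℚ, F x = r := by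
  induction m generalizing x with
  | zero => simpa using hm
  | succ m ih =>
    rw [Function.iterate_succ_apply] at hm
    obtain ⟨r, hr⟩ := ih (hT hx) hm
    obtain ⟨a, b, hab⟩ := hF x hx
    exact ⟨a + b * r, by rw [hab, hr]; push_cast; ring⟩

theorem exists_rat_eq_of_finite_range_iterate (hT : MapsTo T s s)
    (hF : ∀ x ∈ s, ∃ a b : ℚ, |b| < 1 ∧ F x = a + b * F (T x)) {x : α} (hx : x ∈ s)
    (horb : (range fun n => T^[n] x).Finite) : ∃ r : ℚ, F x = r := by
  obtain ⟨m, n, hmn, heq⟩ := horb.exists_lt_map_eq_of_forall_mem fun n => mem_range_self n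
  have hper : Function.IsPeriodicPt T (n - m) (T^[m] x) := by
    rw [Function.IsPeriodicPt, Function.IsFixedPt, ← Function.iterate_add_apply,
      Nat.sub_add_cancel hmn.le, heq]
  refine exists_rat_eq_of_exists_rat_eq_iterate hT
    (fun y hy => (hF y hy).imp fun _ ⟨b, _, h⟩ => ⟨b, h⟩) hx m ?_
  exact exists_rat_eq_of_isPeriodicPt hT hF (hT.iterate m hx) (Nat.sub_pos_of_lt hmn) hper

end AffineRecursion

theorem finite_range_iterate_fract_mul (N : ℕ) (q : ℚ) :
    (range fun n => (fun r : ℚ => Int.fract (N * r))^[n] q).Finite := by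
  set T := fun r : ℚ => Int.fract (N * r)
  set S := (fun k : ℤ => (k : ℚ) / q.den) '' Ico 0 q.den
  have hS : ∀ m : ℤ, T (m / q.den) ∈ S := fun m =>
    ⟨N * m % q.den, ⟨Int.emod_nonneg _ (by positivity), Int.emod_lt_of_pos _ (by positivity)⟩,
      by simp only [T, ← mul_div_assoc, ← Int.fract_div_intCast_eq_div_intCast_mod]; push_cast; rfl⟩
  have horbit : ∀ n, T^[n + 1] q ∈ S := by
    intro n
    induction n with
    | zero => simpa only [zero_add, Function.iterate_one, Rat.num_div_den] using hS q.num
    | succ n ih =>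
      obtain ⟨k, -, hk⟩ := ih
      rw [Function.iterate_succ_apply', ← hk]
      exact hS k
  have hSfin : S.Finite := (finite_Ico 0 (q.den : ℤ)).image _
  refine (hSfin.insert q).subset ?_
  rintro _ ⟨_ | n, rfl⟩
  · exact mem_insert _ _
  · exact mem_insert_of_mem _ (horbit n)

section SelfSimilar

variable {μ : Measure ℝ} [IsProbabilityMeasure μ]

theorem measureReal_Icc_neg_natCast_sub (hsupp : μ (Icc 0 1) = 1) {y : ℝ} (hy : 0 ≤ y) (d : ℕ) :
    μ.real (Icc (-(d : ℝ)) (y - d)) = (if (d : ℝ) + 1 ≤ y then 1 else 0) +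
      if d = ⌊y⌋₊ then μ.real (Icc 0 (Int.fract y)) else 0 := by
  have hconull : μ (Icc 0 1)ᶜ = 0 := (prob_compl_eq_zero_iff measurableSet_Icc).2 hsupp
  have htrunc : μ.real (Icc (-(d : ℝ)) (y - d)) = μ.real (Icc 0 (min (y - d) 1)) := by
    rw [measureReal_def, measureReal_def, ← measure_inter_conull hconull, Icc_inter_Icc,
      max_eq_right (neg_nonpos.2 d.cast_nonneg)]
  rw [htrunc]
  rcases lt_or_ge y d with hyd | hdy
  · have hfloor : ⌊y⌋₊ ≠ d := ((Nat.floor_lt hy).2 hyd).ne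
    rw [if_neg (by linarith), if_neg (Ne.symm hfloor), Icc_eq_empty (not_le.2 (min_lt_of_left_lt (by linarith)))]
    simp
  rcases lt_or_ge y (d + 1) with hyd1 | hdy1
  · have hfloor : ⌊y⌋₊ = d := (Nat.floor_eq_iff hy).2 ⟨hdy, hyd1⟩
    have hfract : Int.fract y = y - d :=
      Int.fract_eq_iff.2 ⟨by linarith, by linarith, d, by simp⟩
    rw [if_neg (by linarith), if_pos hfloor.symm, min_eq_left (by linarith), hfract, zero_add]
  · have hfloor : d + 1 ≤ ⌊y⌋₊ := Nat.le_floor (by exact_mod_cast hdy1)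
    rw [if_pos hdy1, if_neg (by omega), min_eq_right (by linarith), measureReal_def, hsupp]
    simp

theorem measureReal_Icc_zero_eq_of_selfSimilar {N : ℕ} (hN : 0 < N) {D : Finset ℕ}
    (hsupp : μ (Icc 0 1) = 1)
    (hinv : μ = (D.card : ℝ≥0∞)⁻¹ • ∑ d ∈ D, μ.map (fun x : ℝ => (x + (d : ℝ)) / N))
    {x : ℝ} (hx : 0 ≤ x) :
    μ.real (Icc 0 x) = (D.card : ℝ)⁻¹ * ((#(D.filter fun d : ℕ => (d : ℝ) + 1 ≤ N * x) : ℝ) +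
      if ⌊(N : ℝ) * x⌋₊ ∈ D then μ.real (Icc 0 (Int.fract (N * x))) else 0) := by
  have hNpos : (0 : ℝ) < N := by exact_mod_cast hN
  have hpre : ∀ d : ℕ, (fun t : ℝ => (t + d) / N) ⁻¹' Icc 0 x = Icc (-(d : ℝ)) (N * x - d) := by
    intro d
    ext t
    simp only [mem_preimage, mem_Icc, le_div_iff₀ hNpos, div_le_iff₀ hNpos]
    constructor <;> rintro ⟨_, _⟩ <;> constructor <;> linarith
  have hsum : μ.real (Icc 0 x) = (D.card : ℝ)⁻¹ * ∑ d ∈ D, μ.real (Icc (-(d : ℝ)) (N * x - d)) := by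
    conv_lhs => rw [hinv]
    rw [measureReal_ennreal_smul_apply, ENNReal.toReal_inv, ENNReal.toReal_natCast,
      measureReal_def, Measure.finsetSum_apply, ENNReal.toReal_sum fun _ _ => measure_ne_top _ _]
    congr 1
    refine Finset.sum_congr rfl fun d _ => ?_
    rw [Measure.map_apply (by fun_prop) measurableSet_Icc, hpre d,
      measureReal_def]
  rw [hsum, Finset.sum_congr rfl fun d _ => measureReal_Icc_neg_natCast_sub hsupp (by positivity) d,
    Finset.sum_add_distrib, Finset.sum_boole, Finset.sum_ite_eq']

theorem exists_rat_measureReal_Icc_eq {N : ℕ} (hN : 0 < N) {D : Finset ℕ} (hcard : 2 ≤ D.card)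
    (hsupp : μ (Icc 0 1) = 1)
    (hinv : μ = (D.card : ℝ≥0∞)⁻¹ • ∑ d ∈ D, μ.map (fun x : ℝ => (x + (d : ℝ)) / N))
    {q : ℚ} (hq : 0 ≤ q) :
    ∃ a b : ℚ, |b| < 1 ∧
      μ.real (Icc 0 (q : ℝ)) = a + b * μ.real (Icc 0 ((Int.fract (N * q) : ℚ) : ℝ)) := by
  refine ⟨#(D.filter fun d : ℕ => (d : ℝ) + 1 ≤ N * q) / D.card,
    if ⌊(N : ℝ) * q⌋₊ ∈ D then (D.card : ℚ)⁻¹ else 0, ?_, ?_⟩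
  · split_ifs
    · rw [abs_inv, Nat.abs_cast]
      exact inv_lt_one_of_one_lt₀ (by exact_mod_cast hcard)
    · simp
  · rw [measureReal_Icc_zero_eq_of_selfSimilar hN hsupp hinv (by exact_mod_cast hq)]
    split_ifs <;> push_cast <;> ring

end SelfSimilar

theorem cantor_cdf_rational_to_rational_general
    (N : ℕ) (hN : 3 ≤ N) (D : Finset ℕ)
    (hcard : 2 ≤ D.card)
    (μ : Measure ℝ) [IsProbabilityMeasure μ]
    (hsupp : μ (Set.Icc 0 1) = 1)
    (hinv : μ = (D.card : ℝ≥0∞)⁻¹ • ∑ d ∈ D, μ.map (fun x : ℝ => (x + (d : ℝ)) / N)) :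
    ∀ x ∈ Set.Icc (0:ℝ) 1, (∃ q : ℚ, x = (q : ℝ)) →
      ∃ q : ℚ, (μ (Set.Icc 0 x)).toReal = (q : ℝ) := by
  rintro _ ⟨hx, -⟩ ⟨q, rfl⟩
  have hq : q ∈ Ici 0 := by exact_mod_cast hx
  exact exists_rat_eq_of_finite_range_iterate (s := Ici 0)
    (F := fun r : ℚ => μ.real (Icc 0 (r : ℝ)))
    (fun _ _ => mem_Ici.2 (Int.fract_nonneg _))
    (fun _ hr => exists_rat_measureReal_Icc_eq (by omega) hcard hsupp hinv hr) hq
    (finite_range_iterate_fract_mul N q)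

theorem cantor_cdf_rational_to_rational
    (N : ℕ) (hN : 3 ≤ N) (D : Finset ℕ) (hD : D ⊆ Finset.range N)
    (hcard : 2 ≤ D.card) (hcard' : D.card ≤ N - 1)
    (μ : Measure ℝ) [IsProbabilityMeasure μ]
    (hsupp : μ (Set.Icc 0 1) = 1)
    (hinv : μ = (D.card : ℝ≥0∞)⁻¹ • ∑ d ∈ D, μ.map (fun x : ℝ => (x + (d : ℝ)) / N)) :
    ∀ x ∈ Set.Icc (0:ℝ) 1, (∃ q : ℚ, x = (q : ℝ)) →
      ∃ q : ℚ, (μ (Set.Icc 0 x)).toReal = (q : ℝ) :=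
  cantor_cdf_rational_to_rational_general N hN D hcard μ hsupp hinv
end

section
/- For an irrational x ∈ [0,1], x lies in the Cantor set C_B if and only if F_B(x) is irrational. -/
/-!
Write `F t = μ (Iic t)`. For `z ∈ [0, 1)` and `d ∈ D` the invariance of `μ` gives
`F ((z + d) / N) = (#{d' ∈ D | d' < d} + F z) / |D|`: on `C`, `F` rewrites base-`N` digits from `D`
as base-`|D|` digits. Following the digits of an irrational `x ∈ C`, the values of `F` therefore
form the orbit of `F x` under `t ↦ |D| t mod 1` (they stay below `1` because `μ` charges every
neighbourhood of the rational point `max C`). If `F x` were rational this orbit would be finite,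
making the digit sequence of `x` eventually periodic and `x` rational. If `x ∉ C`, a gap of width
`N⁻ᵏ` around `x` in the closed set `C` forces `F x ∈ |D|⁻ᵏ ℤ`.
-/

open MeasureTheory Metric Set
open scoped ENNReal

theorem measure_eq_inv_card_mul_sum_preimage {α ι : Type*} [MeasurableSpace α] {μ : Measure α}
    {D : Finset ι} {f : ι → α → α} (hf : ∀ d, Measurable (f d))
    (hinv : μ = (D.card : ℝ≥0∞)⁻¹ • ∑ d ∈ D, μ.map (f d)) {s : Set α} (hs : MeasurableSet s) :
    μ s = (D.card : ℝ≥0∞)⁻¹ * ∑ d ∈ D, μ (f d ⁻¹' s) := by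
  conv_lhs => rw [hinv]
  simp only [Measure.smul_apply, Measure.finsetSum_apply, smul_eq_mul, Measure.map_apply (hf _) hs]

theorem inv_card_mul_measure_preimage_le {α ι : Type*} [MeasurableSpace α] {μ : Measure α}
    {D : Finset ι} {f : ι → α → α} (hf : ∀ d, Measurable (f d))
    (hinv : μ = (D.card : ℝ≥0∞)⁻¹ • ∑ d ∈ D, μ.map (f d)) {s : Set α} (hs : MeasurableSet s)
    {d : ι} (hd : d ∈ D) :
    (D.card : ℝ≥0∞)⁻¹ * μ (f d ⁻¹' s) ≤ μ s := by
  rw [measure_eq_inv_card_mul_sum_preimage hf hinv hs]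
  gcongr
  exact Finset.single_le_sum (f := fun e => μ (f e ⁻¹' s)) (fun _ _ => zero_le) hd

theorem strictMonoOn_card_filter_lt {α : Type*} [LinearOrder α] (D : Finset α) :
    StrictMonoOn (fun d => (D.filter (· < d)).card) D := by
  intro a ha b _ hab
  refine Finset.card_lt_card ((Finset.ssubset_iff_of_subset ?_).2 ⟨a, ?_, ?_⟩)
  · exact Finset.monotone_filter_right D fun x _ hx => hx.trans hab
  · exact Finset.mem_filter.2 ⟨ha, hab⟩
  · simp

noncomputable def digitMap (N d : ℕ) (x : ℝ) : ℝ := (x + d) / N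

section

variable {N : ℕ}

theorem measurable_digitMap (d : ℕ) : Measurable (digitMap N d) := by
  unfold digitMap
  fun_prop

theorem monotone_digitMap (d : ℕ) : Monotone (digitMap N d) :=
  fun _ _ h => by unfold digitMap; gcongr

theorem natCast_mul_digitMap (hN : N ≠ 0) (d : ℕ) (x : ℝ) : N * digitMap N d x = x + d := by
  unfold digitMap
  field_simp

theorem preimage_digitMap_Iic (hN : 0 < N) (d : ℕ) (y : ℝ) :
    digitMap N d ⁻¹' Iic y = Iic (N * y - d) := by
  ext t
  rw [mem_preimage, mem_Iic, mem_Iic, digitMap, div_le_iff₀ (by exact_mod_cast hN)]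
  constructor <;> intro <;> linarith

theorem preimage_digitMap_closedBall (hN : 0 < N) (d : ℕ) (x r : ℝ) :
    digitMap N d ⁻¹' closedBall x (r / N) = closedBall (N * x - d) r := by
  have hN' : (0 : ℝ) < N := by exact_mod_cast hN
  ext t
  rw [mem_preimage, mem_closedBall, mem_closedBall, Real.dist_eq, Real.dist_eq, digitMap,
    show (t + d) / N - x = (t - (N * x - d)) / N by field_simp; ring, abs_div, abs_of_pos hN',
    div_le_div_iff_of_pos_right hN']

theorem eq_sum_add_div_pow (hN : N ≠ 0) {y : ℕ → ℝ} {d : ℕ → ℕ}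
    (h : ∀ i, y i = digitMap N (d i) (y (i + 1))) (n : ℕ) :
    y 0 = ∑ t ∈ Finset.range n, (d t : ℝ) / N ^ (t + 1) + y n / N ^ n := by
  induction n with
  | zero => simp
  | succ n ih =>
    rw [ih, Finset.sum_range_succ, h n, digitMap]
    field_simp
    ring

theorem eq_of_forall_eq_digitMap (hN : 1 < N) {y y' : ℕ → ℝ} {d : ℕ → ℕ}
    (h : ∀ i, y i = digitMap N (d i) (y (i + 1))) (h' : ∀ i, y' i = digitMap N (d i) (y' (i + 1)))
    (hy : ∀ i, y i ∈ Icc 0 1) (hy' : ∀ i, y' i ∈ Icc 0 1) : y 0 = y' 0 := by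
  have hN' : (1 : ℝ) < N := by exact_mod_cast hN
  have hNn (n : ℕ) : (0 : ℝ) < N ^ n := pow_pos (by linarith) n
  refine eq_of_forall_dist_le fun ε hε => ?_
  obtain ⟨n, hn⟩ := exists_pow_lt_of_lt_one hε (inv_lt_one_of_one_lt₀ hN')
  have hdist : dist (y 0) (y' 0) = dist (y n) (y' n) / N ^ n := by
    rw [eq_sum_add_div_pow (by omega) h n, eq_sum_add_div_pow (by omega) h' n, Real.dist_eq,
      Real.dist_eq, add_sub_add_left_eq_sub, ← sub_div, abs_div, abs_of_pos (hNn n)]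
  rw [hdist, div_le_iff₀ (hNn n)]
  rw [inv_pow, inv_lt_iff_one_lt_mul₀ (hNn n)] at hn
  exact (Real.dist_le_of_mem_Icc_01 (hy n) (hy' n)).trans hn.le

theorem not_irrational_of_forall_eq_digitMap (hN : 1 < N) {y : ℕ → ℝ} {d : ℕ → ℕ}
    (h : ∀ i, y i = digitMap N (d i) (y (i + 1))) {p : ℕ} (hp : 0 < p) (hper : y p = y 0) :
    ¬Irrational (y 0) := by
  have hNp : (1 : ℝ) < N ^ p := one_lt_pow₀ (by exact_mod_cast hN) hp.ne'
  have hexp := eq_sum_add_div_pow (by omega) h p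
  rw [hper] at hexp
  refine fun hirr =>
    hirr ⟨(∑ t ∈ Finset.range p, (d t : ℚ) / N ^ (t + 1)) * N ^ p / (N ^ p - 1), ?_⟩
  push_cast
  rw [div_eq_iff (by linarith)]
  field_simp at hexp
  linear_combination -hexp

end

section

variable {N : ℕ} {D : Finset ℕ} {C : Set ℝ} (hCattr : C = ⋃ d ∈ D, digitMap N d '' C)
include hCattr

theorem digitMap_mem {d : ℕ} (hd : d ∈ D) {c : ℝ} (hc : c ∈ C) : digitMap N d c ∈ C := by
  rw [hCattr]
  exact mem_biUnion hd (mem_image_of_mem _ hc)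

theorem exists_digitMap_eq {c : ℝ} (hc : c ∈ C) :
    ∃ d ∈ D, ∃ c' ∈ C, digitMap N d c' = c := by
  rw [hCattr] at hc
  simpa using hc

theorem exists_rat_sSup_eq (hN : 1 < N) (hC : IsCompact C) (hne : C.Nonempty) :
    ∃ q : ℚ, sSup C = q := by
  have hM := hC.sSup_mem hne
  obtain ⟨d, hd, c, hc, hcM⟩ := exists_digitMap_eq hCattr hM
  have hfix : digitMap N d (sSup C) = sSup C := by
    refine le_antisymm (le_csSup hC.bddAbove (digitMap_mem hCattr hd hM)) ?_
    calc sSup C = digitMap N d c := hcM.symm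
      _ ≤ digitMap N d (sSup C) := monotone_digitMap d (le_csSup hC.bddAbove hc)
  have hN' : (1 : ℝ) < N := by exact_mod_cast hN
  refine ⟨d / (N - 1), ?_⟩
  rw [digitMap, div_eq_iff (by linarith)] at hfix
  push_cast
  rw [eq_div_iff (by linarith)]
  linarith

theorem exists_seq_irrational_digitMap {x : ℝ} (hx : x ∈ C) (hirr : Irrational x) :
    ∃ (y : ℕ → ℝ) (d : ℕ → ℕ), y 0 = x ∧ (∀ i, y i ∈ C) ∧ (∀ i, Irrational (y i)) ∧
      (∀ i, d i ∈ D) ∧ ∀ i, y i = digitMap N (d i) (y (i + 1)) := by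
  have hstep : ∀ y, y ∈ C ∧ Irrational y →
      ∃ z, (z ∈ C ∧ Irrational z) ∧ ∃ d ∈ D, digitMap N d z = y := by
    rintro y ⟨hy, hyirr⟩
    obtain ⟨d, hd, z, hz, rfl⟩ := exists_digitMap_eq hCattr hy
    exact ⟨z, ⟨hz, (hyirr.of_div_natCast N).of_add_natCast d⟩, d, hd, rfl⟩
  choose! g hg e he hge using hstep
  have hmem : ∀ i, g^[i] x ∈ C ∧ Irrational (g^[i] x) := by
    intro i
    induction i with
    | zero => exact ⟨hx, hirr⟩
    | succ i ih => exact Function.iterate_succ_apply' g i x ▸ hg _ ih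
  refine ⟨fun i => g^[i] x, fun i => e (g^[i] x), rfl, fun i => (hmem i).1, fun i => (hmem i).2,
    fun i => he _ (hmem i), fun i => ?_⟩
  simp only [Function.iterate_succ_apply', hge _ (hmem i)]

end

section

variable {μ : Measure ℝ} [IsProbabilityMeasure μ]

theorem measure_Icc_zero_one_of_subset {C : Set ℝ} (hCsub : C ⊆ Icc 0 1) (hsupp : μ C = 1) :
    μ (Icc 0 1) = 1 :=
  le_antisymm prob_le_one (hsupp ▸ measure_mono hCsub)

variable (h01 : μ (Icc 0 1) = 1)
include h01

theorem measure_Iio_zero : μ (Iio 0) = 0 :=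
  measure_mono_null (t := (Icc 0 1)ᶜ) (fun _ ht ht01 => (not_le.2 ht) ht01.1)
    ((prob_compl_eq_zero_iff measurableSet_Icc).2 h01)

theorem measure_Iic_of_neg {t : ℝ} (ht : t < 0) : μ (Iic t) = 0 :=
  measure_mono_null (Iic_subset_Iio.2 ht) (measure_Iio_zero h01)

theorem measure_Iic_of_one_le {t : ℝ} (ht : 1 ≤ t) : μ (Iic t) = 1 :=
  le_antisymm prob_le_one (h01 ▸ measure_mono fun _ hs => hs.2.trans ht)

theorem measure_Icc_zero_eq_measure_Iic {x : ℝ} (hx : 0 ≤ x) : μ (Icc 0 x) = μ (Iic x) := by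
  refine le_antisymm (measure_mono Icc_subset_Iic_self) ?_
  calc μ (Iic x) = μ (Iio 0 ∪ Icc 0 x) := by rw [Iio_union_Icc_eq_Iic hx]
    _ ≤ μ (Iio 0) + μ (Icc 0 x) := measure_union_le _ _
    _ = μ (Icc 0 x) := by rw [measure_Iio_zero h01, zero_add]

variable {N : ℕ} {D : Finset ℕ} (hinv : μ = (D.card : ℝ≥0∞)⁻¹ • ∑ d ∈ D, μ.map (digitMap N d))
include hinv

theorem measure_Iic_digitMap (hN : 0 < N) {z : ℝ} (hz : z ∈ Ico 0 1) {d : ℕ} (hd : d ∈ D) :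
    μ (Iic (digitMap N d z)) = (D.card : ℝ≥0∞)⁻¹ * ((D.filter (· < d)).card + μ (Iic z)) := by
  rw [measure_eq_inv_card_mul_sum_preimage measurable_digitMap hinv measurableSet_Iic]
  congr 1
  have hterm : ∀ e ∈ D, μ (digitMap N e ⁻¹' Iic (digitMap N d z)) =
      (if e < d then 1 else 0) + (if d = e then μ (Iic z) else 0) := by
    intro e _
    rw [preimage_digitMap_Iic hN, natCast_mul_digitMap hN.ne']
    rcases lt_trichotomy e d with h | rfl | h
    · have : (e : ℝ) + 1 ≤ d := by exact_mod_cast h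
      rw [measure_Iic_of_one_le h01 (by linarith [hz.1]), if_pos h, if_neg h.ne', add_zero]
    · simp
    · have : (d : ℝ) + 1 ≤ e := by exact_mod_cast h
      rw [measure_Iic_of_neg h01 (by linarith [hz.2]), if_neg h.not_gt, if_neg h.ne, add_zero]
  rw [Finset.sum_congr rfl hterm, Finset.sum_add_distrib, Finset.sum_boole, Finset.sum_ite_eq,
    if_pos hd]

theorem card_mul_toReal_measure_Iic_digitMap (hN : 0 < N) {z : ℝ} (hz : z ∈ Ico 0 1) {d : ℕ}
    (hd : d ∈ D) :
    D.card * (μ (Iic (digitMap N d z))).toReal =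
      (D.filter (· < d)).card + (μ (Iic z)).toReal := by
  have hD : (D.card : ℝ≥0∞) ≠ 0 := Nat.cast_ne_zero.2 (Finset.card_ne_zero_of_mem hd)
  rw [← ENNReal.toReal_natCast, ← ENNReal.toReal_mul, measure_Iic_digitMap h01 hinv hN hz hd,
    ← mul_assoc, ENNReal.mul_inv_cancel hD (ENNReal.natCast_ne_top _), one_mul,
    ENNReal.toReal_add (ENNReal.natCast_ne_top _) (measure_ne_top _ _), ENNReal.toReal_natCast]

end

theorem exists_lt_forall_add_eq_of_rat {m : ℕ} {a : ℕ → ℝ} {c : ℕ → ℕ}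
    (ha : ∀ i, a i ∈ Ico 0 1) (hrec : ∀ i, m * a i = c i + a (i + 1)) {q : ℚ} (hq : a 0 = q) :
    ∃ i j, i < j ∧ ∀ t, c (i + t) = c (j + t) := by
  have hc : ∀ i, c i = ⌊m * a i⌋₊ := fun i =>
    ((Nat.floor_eq_iff (by rw [hrec]; linarith [(ha (i + 1)).1])).2
      ⟨by rw [hrec]; linarith [(ha (i + 1)).1], by rw [hrec]; linarith [(ha (i + 1)).2]⟩).symm
  have hnext : ∀ i, a (i + 1) = m * a i - ⌊m * a i⌋₊ := fun i => by rw [← hc, hrec]; ring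
  -- `a` is confined to the finite set `(1 / q.den) ℤ ∩ [0, 1)`, so it must repeat
  have hint : ∀ i, ∃ k : ℤ, a i * q.den = k := by
    intro i
    induction i with
    | zero => exact ⟨q.num, by rw [hq]; exact_mod_cast Rat.mul_den_eq_num q⟩
    | succ i ih =>
      obtain ⟨k, hk⟩ := ih
      exact ⟨m * k - c i * q.den, by rw [hnext, ← hc]; push_cast; rw [← hk]; ring⟩
  have hden : (0 : ℝ) < q.den := by exact_mod_cast q.den_pos
  have hmem : ∀ i, a i ∈ (Finset.Ico (0 : ℤ) q.den).image fun k : ℤ => (k : ℝ) / q.den := by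
    intro i
    obtain ⟨k, hk⟩ := hint i
    have h0 : (0 : ℝ) ≤ k := hk ▸ mul_nonneg (ha i).1 hden.le
    have h1 : (k : ℝ) < q.den := hk ▸ (mul_lt_iff_lt_one_left hden).2 (ha i).2
    exact Finset.mem_image.2 ⟨k, Finset.mem_Ico.2 ⟨by exact_mod_cast h0, by exact_mod_cast h1⟩,
      by rw [← hk, mul_div_cancel_right₀ _ hden.ne']⟩
  obtain ⟨i, j, hij, haij⟩ := Finite.exists_lt_map_eq_of_forall_mem hmem (Finset.finite_toSet _)
  have hshift : ∀ t, a (i + t) = a (j + t) := by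
    intro t
    induction t with
    | zero => exact haij
    | succ t ih => rw [← add_assoc, ← add_assoc, hnext, hnext, ih]
  exact ⟨i, j, hij, fun t => by rw [hc, hc, hshift]⟩

section

variable {N : ℕ} {D : Finset ℕ} {C : Set ℝ} {μ : Measure ℝ} (hCsub : C ⊆ Icc 0 1) (hsupp : μ C = 1)
  (hCattr : C = ⋃ d ∈ D, digitMap N d '' C)
  (hinv : μ = (D.card : ℝ≥0∞)⁻¹ • ∑ d ∈ D, μ.map (digitMap N d))
include hCsub hsupp hCattr hinv

theorem measure_closedBall_ne_zero (hN : 0 < N) (k : ℕ) :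
    ∀ c ∈ C, μ (closedBall c ((N : ℝ)⁻¹ ^ k)) ≠ 0 := by
  induction k with
  | zero =>
    intro c hc
    have hsub : C ⊆ closedBall c 1 := fun t ht =>
      Real.dist_le_of_mem_Icc_01 (hCsub ht) (hCsub hc)
    rw [pow_zero]
    exact ne_bot_of_le_ne_bot (hsupp ▸ one_ne_zero) (measure_mono hsub)
  | succ k ih =>
    intro c hc
    obtain ⟨d, hd, c', hc', rfl⟩ := exists_digitMap_eq hCattr hc
    have hle := inv_card_mul_measure_preimage_le measurable_digitMap hinv
      (measurableSet_closedBall (x := digitMap N d c') (ε := (N : ℝ)⁻¹ ^ (k + 1))) hd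
    rw [pow_succ, ← div_eq_mul_inv, preimage_digitMap_closedBall hN,
      natCast_mul_digitMap hN.ne', add_sub_cancel_right] at hle
    exact ne_bot_of_le_ne_bot (mul_ne_zero (ENNReal.inv_ne_zero.2 (ENNReal.natCast_ne_top _))
      (ih c' hc')) hle

theorem measure_ball_pos (hN : 1 < N) {c : ℝ} (hc : c ∈ C) {ε : ℝ} (hε : 0 < ε) :
    0 < μ (ball c ε) := by
  obtain ⟨k, hk⟩ := exists_pow_lt_of_lt_one hε (inv_lt_one_of_one_lt₀ (Nat.one_lt_cast.2 hN))
  exact (pos_iff_ne_zero.2 (measure_closedBall_ne_zero hCsub hsupp hCattr hinv (by omega) k c hc))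
    |>.trans_le (measure_mono (closedBall_subset_ball hk))

theorem measure_Iic_lt_one [IsProbabilityMeasure μ] (hN : 1 < N) (hC : IsCompact C) {y : ℝ}
    (hy : y ∈ C) (hirr : Irrational y) : μ (Iic y) < 1 := by
  obtain ⟨q, hq⟩ := exists_rat_sSup_eq hCattr hN hC ⟨y, hy⟩
  have hyM : y < sSup C := (le_csSup hC.bddAbove hy).lt_of_ne (hq ▸ hirr.ne_rat q)
  have hpos : 0 < μ (Ioi y) := by
    refine (measure_ball_pos hCsub hsupp hCattr hinv hN (hC.sSup_mem ⟨y, hy⟩) (sub_pos.2 hyM))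
      |>.trans_le (measure_mono ?_)
    rw [Real.ball_eq_Ioo, sub_sub_cancel]
    exact Ioo_subset_Ioi_self
  rw [← compl_Ioi, prob_compl_eq_one_sub measurableSet_Ioi]
  exact ENNReal.sub_lt_self ENNReal.one_ne_top one_ne_zero hpos.ne'

theorem irrational_measure_Iic_of_mem [IsProbabilityMeasure μ] (hN : 1 < N) (hC : IsCompact C)
    {x : ℝ} (hx : x ∈ C) (hirr : Irrational x) : Irrational (μ (Iic x)).toReal := by
  obtain ⟨y, d, rfl, hyC, hyirr, hdD, hyd⟩ := exists_seq_irrational_digitMap hCattr hx hirr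
  have hy01 : ∀ i, y i ∈ Ico 0 1 := fun i =>
    ⟨(hCsub (hyC i)).1, (hCsub (hyC i)).2.lt_of_ne (hyirr i).ne_one⟩
  have ha : ∀ i, (μ (Iic (y i))).toReal ∈ Ico 0 1 := fun i =>
    ⟨ENNReal.toReal_nonneg, ENNReal.toReal_lt_of_lt_ofReal (by
      simpa using measure_Iic_lt_one hCsub hsupp hCattr hinv hN hC (hyC i) (hyirr i))⟩
  have hrec : ∀ i, D.card * (μ (Iic (y i))).toReal =
      (D.filter (· < d i)).card + (μ (Iic (y (i + 1)))).toReal := fun i => by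
    rw [hyd i]
    exact card_mul_toReal_measure_Iic_digitMap (measure_Icc_zero_one_of_subset hCsub hsupp) hinv
      (by omega) (hy01 (i + 1)) (hdD i)
  rintro ⟨q, hq⟩
  obtain ⟨i, j, hij, hc⟩ := exists_lt_forall_add_eq_of_rat ha hrec hq.symm
  have hd : ∀ t, d (i + t) = d (j + t) := fun t =>
    (strictMonoOn_card_filter_lt D).injOn (hdD _) (hdD _) (hc t)
  have hyij : y i = y j :=
    eq_of_forall_eq_digitMap hN (y := fun t => y (i + t)) (y' := fun t => y (j + t))
      (fun t => hyd (i + t)) (fun t => by rw [hd]; exact hyd (j + t))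
      (fun _ => hCsub (hyC _)) (fun _ => hCsub (hyC _))
  refine not_irrational_of_forall_eq_digitMap hN (y := fun t => y (i + t)) (fun t => hyd (i + t))
    (Nat.sub_pos_of_lt hij) ?_ (hyirr i)
  simp only [Nat.add_sub_cancel' hij.le, hyij, add_zero]

theorem exists_measure_Iic_eq_of_disjoint [IsProbabilityMeasure μ] (hN : 0 < N)
    (hCm : MeasurableSet C) (k : ℕ) :
    ∀ x, Disjoint (closedBall x ((N : ℝ)⁻¹ ^ k)) C →
      ∃ j : ℕ, μ (Iic x) = j * (D.card : ℝ≥0∞)⁻¹ ^ k := by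
  induction k with
  | zero =>
    intro x hx
    rcases le_or_gt 1 x with h1 | h1
    · exact ⟨1, by rw [measure_Iic_of_one_le (measure_Icc_zero_one_of_subset hCsub hsupp) h1]; simp⟩
    · refine ⟨0, ?_⟩
      rw [Nat.cast_zero, zero_mul]
      refine measure_mono_null (t := Cᶜ) (fun t (ht : t ≤ x) htC => hx.ne_of_mem ?_ htC rfl)
        ((prob_compl_eq_zero_iff hCm).2 hsupp)
      rw [pow_zero, Real.closedBall_eq_Icc]
      constructor <;> linarith [(hCsub htC).1]
  | succ k ih =>
    intro x hx
    have hgap : ∀ d ∈ D, Disjoint (closedBall (N * x - d) ((N : ℝ)⁻¹ ^ k)) C := by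
      intro d hd
      rw [pow_succ, ← div_eq_mul_inv] at hx
      rw [← preimage_digitMap_closedBall hN]
      exact disjoint_left.2 fun t ht htC => disjoint_left.1 hx ht (digitMap_mem hCattr hd htC)
    choose! j hj using fun d hd => ih _ (hgap d hd)
    refine ⟨∑ d ∈ D, j d, ?_⟩
    rw [measure_eq_inv_card_mul_sum_preimage measurable_digitMap hinv measurableSet_Iic]
    simp_rw [preimage_digitMap_Iic hN]
    rw [Finset.sum_congr rfl hj, ← Finset.sum_mul, pow_succ']
    push_cast
    ring

theorem not_irrational_measure_Iic_of_notMem [IsProbabilityMeasure μ] (hN : 1 < N)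
    (hC : IsClosed C) {x : ℝ} (hx : x ∉ C) : ¬Irrational (μ (Iic x)).toReal := by
  obtain ⟨ε, hε, hball⟩ := nhds_basis_closedBall.mem_iff.1 (hC.isOpen_compl.mem_nhds hx)
  obtain ⟨k, hk⟩ := exists_pow_lt_of_lt_one hε (inv_lt_one_of_one_lt₀ (Nat.one_lt_cast.2 hN))
  obtain ⟨j, hj⟩ := exists_measure_Iic_eq_of_disjoint hCsub hsupp hCattr hinv (by omega)
    hC.measurableSet k x
    (subset_compl_iff_disjoint_right.1 ((closedBall_subset_closedBall hk.le).trans hball))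
  rw [hj]
  exact fun h => h ⟨j / D.card ^ k, by simp [div_eq_mul_inv]⟩

end

theorem irrational_mem_cantor_iff_cdf_irrational_general
    (N : ℕ) (hN : 3 ≤ N) (D : Finset ℕ)
    (C : Set ℝ) (hCcompact : IsCompact C)
    (hCsub : C ⊆ Set.Icc 0 1)
    (hCattr : C = ⋃ d ∈ D, (fun x : ℝ => (x + (d : ℝ)) / N) '' C)
    (μ : Measure ℝ) [IsProbabilityMeasure μ]
    (hsupp : μ C = 1)
    (hinv : μ = (D.card : ℝ≥0∞)⁻¹ • ∑ d ∈ D, μ.map (fun x : ℝ => (x + (d : ℝ)) / N)) :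
    ∀ x ∈ Set.Icc (0:ℝ) 1, Irrational x →
      (x ∈ C ↔ Irrational ((μ (Set.Icc 0 x)).toReal)) := by
  intro x hx hxirr
  have hN1 : 1 < N := by omega
  rw [measure_Icc_zero_eq_measure_Iic (measure_Icc_zero_one_of_subset hCsub hsupp) hx.1]
  exact ⟨fun hxC => irrational_measure_Iic_of_mem hCsub hsupp hCattr hinv hN1 hCcompact hxC hxirr,
    fun h => by_contra fun hxC =>
      not_irrational_measure_Iic_of_notMem hCsub hsupp hCattr hinv hN1 hCcompact.isClosed hxC h⟩

theorem irrational_mem_cantor_iff_cdf_irrational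
    (N : ℕ) (hN : 3 ≤ N) (D : Finset ℕ) (hD : D ⊆ Finset.range N)
    (hcard : 2 ≤ D.card) (hcard' : D.card ≤ N - 1)
    (C : Set ℝ) (hCcompact : IsCompact C) (hCne : C.Nonempty)
    (hCsub : C ⊆ Set.Icc 0 1)
    (hCattr : C = ⋃ d ∈ D, (fun x : ℝ => (x + (d : ℝ)) / N) '' C)
    (μ : Measure ℝ) [IsProbabilityMeasure μ]
    (hsupp : μ C = 1)
    (hinv : μ = (D.card : ℝ≥0∞)⁻¹ • ∑ d ∈ D, μ.map (fun x : ℝ => (x + (d : ℝ)) / N)) :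
    ∀ x ∈ Set.Icc (0:ℝ) 1, Irrational x →
      (x ∈ C ↔ Irrational ((μ (Set.Icc 0 x)).toReal)) :=
  irrational_mem_cantor_iff_cdf_irrational_general N hN D C hCcompact hCsub hCattr μ hsupp hinv
end

section
/- If x ∈ [0,1] does not belong to the Cantor set C_B, then F_B(x) is rational. -/
open MeasureTheory ProbabilityTheory Set
open scoped ENNReal

/-!
Self-similarity of `μ` expresses `F(x)` as the average of the values `F(N x - d)`, `d ∈ D`, and
each point `N x - d` is `N` times farther from `C` than `x` is, because the maps
`c ↦ (c + d) / N` send `C` into itself. A point at positive distance from `C` therefore reaches,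
after finitely many such steps, distance `> 1` from `C ⊆ [0, 1]`, where `F` is `0` or `1`.
-/

lemma preimage_div_add_Iic {N : ℕ} (hN : 0 < N) (d : ℕ) (x : ℝ) :
    (fun y : ℝ => (y + d) / N) ⁻¹' Iic x = Iic (N * x - d) := by
  ext y
  simp only [mem_preimage, mem_Iic, div_le_iff₀ (Nat.cast_pos.mpr hN : (0 : ℝ) < N)]
  constructor <;> intro h <;> linarith

section Cdf

variable {μ : Measure ℝ} [IsProbabilityMeasure μ]

lemma cdf_eq_average {N : ℕ} (hN : 0 < N) {D : Finset ℕ}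
    (hinv : μ = (D.card : ℝ≥0∞)⁻¹ • ∑ d ∈ D, μ.map (fun x : ℝ => (x + (d : ℝ)) / N)) (x : ℝ) :
    cdf μ x = (∑ d ∈ D, cdf μ (N * x - d)) / D.card := by
  have hmap : ∀ d ∈ D, μ.map (fun y : ℝ => (y + (d : ℝ)) / N) (Iic x) = μ (Iic (N * x - d)) :=
    fun d _ => by
      rw [Measure.map_apply (by fun_prop) measurableSet_Iic, preimage_div_add_Iic hN]
  simp only [cdf_eq_real, measureReal_def]
  conv_lhs => rw [hinv]
  rw [Measure.smul_apply, smul_eq_mul, Measure.coe_finsetSum, Finset.sum_apply,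
    Finset.sum_congr rfl hmap, ENNReal.toReal_mul, ENNReal.toReal_inv, ENNReal.toReal_natCast,
    ENNReal.toReal_sum fun d _ => measure_ne_top μ _, div_eq_inv_mul]

variable {C : Set ℝ}

lemma cdf_eq_zero_of_disjoint (hC : μ Cᶜ = 0) {x : ℝ} (hx : Disjoint (Iic x) C) :
    cdf μ x = 0 := by
  rw [cdf_eq_real, measureReal_def, measure_mono_null hx.subset_compl_right hC,
    ENNReal.toReal_zero]

lemma cdf_eq_one_of_subset (hC : μ Cᶜ = 0) {x : ℝ} (hx : C ⊆ Iic x) : cdf μ x = 1 := by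
  rw [cdf_eq_real, measureReal_def,
    (prob_compl_eq_zero_iff measurableSet_Iic).mp (measure_mono_null (compl_subset_compl.mpr hx) hC),
    ENNReal.toReal_one]

lemma cdf_eq_measureReal_Icc (hC : μ Cᶜ = 0) (hC0 : C ⊆ Ici 0) (x : ℝ) :
    cdf μ x = μ.real (Icc 0 x) := by
  have hIci : μ (Ici 0)ᶜ = 0 := measure_mono_null (compl_subset_compl.mpr hC0) hC
  rw [cdf_eq_real, ← Iic_inter_Ici, measureReal_def, measureReal_def, measure_inter_conull hIci]

lemma cdf_mem_fieldRange_ratCast_of_far {N : ℕ} (hN : 0 < N) {D : Finset ℕ}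
    (hinv : μ = (D.card : ℝ≥0∞)⁻¹ • ∑ d ∈ D, μ.map (fun x : ℝ => (x + (d : ℝ)) / N))
    (hC : μ Cᶜ = 0) (hCsub : C ⊆ Icc 0 1) {c₀ : ℝ} (hc₀ : c₀ ∈ C)
    (hself : ∀ d ∈ D, ∀ c ∈ C, (c + d) / N ∈ C) (k : ℕ) :
    ∀ z : ℝ, (∀ c ∈ C, 1 < (N : ℝ) ^ k * |z - c|) → cdf μ z ∈ (Rat.castHom ℝ).fieldRange := by
  induction k with
  | zero =>
    intro z hfar
    have hfar₀ := hfar c₀ hc₀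
    rw [pow_zero, one_mul, lt_abs] at hfar₀
    obtain ⟨h₀, h₁⟩ := hCsub hc₀
    rcases lt_or_ge z 0 with hz | hz
    · rw [cdf_eq_zero_of_disjoint hC
        (disjoint_left.mpr fun c hcz hcC => (lt_of_le_of_lt hcz hz).not_ge (hCsub hcC).1)]
      exact zero_mem _
    · have hz₁ : 1 ≤ z := by rcases hfar₀ with h | h <;> linarith
      rw [cdf_eq_one_of_subset hC fun c hc => (hCsub hc).2.trans hz₁]
      exact one_mem _
  | succ k ih =>
    intro z hfar
    have hNpos : (0 : ℝ) < N := Nat.cast_pos.mpr hN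
    rw [cdf_eq_average hN hinv]
    refine div_mem (sum_mem fun d hd => ih _ fun c hc => ?_) (natCast_mem _ _)
    have hscale : (N : ℝ) ^ k * |N * z - d - c| = (N : ℝ) ^ (k + 1) * |z - (c + d) / N| := by
      rw [show (N : ℝ) * z - d - c = N * (z - (c + d) / N) by field_simp; ring, abs_mul,
        abs_of_pos hNpos, pow_succ, mul_assoc]
    exact hscale ▸ hfar _ (hself d hd c hc)

end Cdf

theorem cdf_rational_outside_cantor_general
    (N : ℕ) (hN : 3 ≤ N) (D : Finset ℕ)
    (C : Set ℝ) (hCcompact : IsCompact C) (hCne : C.Nonempty)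
    (hCsub : C ⊆ Set.Icc 0 1)
    (hCattr : C = ⋃ d ∈ D, (fun x : ℝ => (x + (d : ℝ)) / N) '' C)
    (μ : Measure ℝ) [IsProbabilityMeasure μ]
    (hsupp : μ C = 1)
    (hinv : μ = (D.card : ℝ≥0∞)⁻¹ • ∑ d ∈ D, μ.map (fun x : ℝ => (x + (d : ℝ)) / N)) :
    ∀ x ∈ Set.Icc (0:ℝ) 1, x ∉ C →
      ∃ q : ℚ, (μ (Set.Icc 0 x)).toReal = (q : ℝ) := by
  intro x _ hxC
  have hC : μ Cᶜ = 0 := (prob_compl_eq_zero_iff hCcompact.isClosed.measurableSet).mpr hsupp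
  have hself : ∀ d ∈ D, ∀ c ∈ C, (c + d) / N ∈ C := fun d hd c hc =>
    hCattr ▸ mem_biUnion hd ⟨c, hc, rfl⟩
  obtain ⟨c₀, hc₀⟩ := hCne
  have hdist : 0 < Metric.infDist x C :=
    (hCcompact.isClosed.notMem_iff_infDist_pos ⟨c₀, hc₀⟩).mp hxC
  obtain ⟨k, hk⟩ := pow_unbounded_of_one_lt (Metric.infDist x C)⁻¹
    (by exact_mod_cast (by omega : 1 < N) : (1 : ℝ) < N)
  have hfar : ∀ c ∈ C, 1 < (N : ℝ) ^ k * |x - c| := fun c hc =>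
    calc 1 < (N : ℝ) ^ k * Metric.infDist x C := (inv_lt_iff_one_lt_mul₀ hdist).mp hk
      _ ≤ (N : ℝ) ^ k * |x - c| := by
        gcongr
        exact Real.dist_eq x c ▸ Metric.infDist_le_dist_of_mem hc
  obtain ⟨q, hq⟩ := RingHom.mem_fieldRange.mp <|
    cdf_mem_fieldRange_ratCast_of_far (by omega) hinv hC hCsub hc₀ hself k x hfar
  refine ⟨q, ?_⟩
  rw [← measureReal_def, ← cdf_eq_measureReal_Icc hC fun c hc => (hCsub hc).1, ← hq]
  rfl

theorem cdf_rational_outside_cantor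
    (N : ℕ) (hN : 3 ≤ N) (D : Finset ℕ) (hD : D ⊆ Finset.range N)
    (hcard : 2 ≤ D.card) (hcard' : D.card ≤ N - 1)
    (C : Set ℝ) (hCcompact : IsCompact C) (hCne : C.Nonempty)
    (hCsub : C ⊆ Set.Icc 0 1)
    (hCattr : C = ⋃ d ∈ D, (fun x : ℝ => (x + (d : ℝ)) / N) '' C)
    (μ : Measure ℝ) [IsProbabilityMeasure μ]
    (hsupp : μ C = 1)
    (hinv : μ = (D.card : ℝ≥0∞)⁻¹ • ∑ d ∈ D, μ.map (fun x : ℝ => (x + (d : ℝ)) / N)) :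
    ∀ x ∈ Set.Icc (0:ℝ) 1, x ∉ C →
      ∃ q : ℚ, (μ (Set.Icc 0 x)).toReal = (q : ℝ) :=
  cdf_rational_outside_cantor_general N hN D C hCcompact hCne hCsub hCattr μ hsupp hinv
end

section
/- For any digit set D = {ε_0,...,ε_{d-1}} ⊆ {0,...,N-1} with d ≥ 2, any real t and any j, the averaged exponential sum satisfies |(1/d) Σ_{k=0}^{d-1} e^{2πi(t/N^j)ε_k}| ≤ |cos(π t |ε_a - ε_b| / N^j)|, where ε_a, ε_b are distinct elements of D maximizing |e^{2πi(t/N^j)ε_l} + e^{2πi(t/N^j)ε_m}| over distinct pairs l ≠ m. -/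
open Complex Real

/-!
Summing `e_k + e_l` over the ordered pairs `k ≠ l` of the `d` digits counts every term
`2 (d - 1)` times, so the average has modulus at most half of the largest pair sum, and
`‖e^{iu} + e^{iv}‖ = 2 |cos ((u - v) / 2)|`.
-/

theorem Finset.two_mul_norm_sum_le_card_mul {ι E : Type*} [NormedAddCommGroup E]
    [NormedSpace ℝ E] {s : Finset ι} (hs : 2 ≤ s.card) (f : ι → E) {M : ℝ}
    (h : ∀ k ∈ s, ∀ l ∈ s, k ≠ l → ‖f k + f l‖ ≤ M) :
    2 * ‖∑ i ∈ s, f i‖ ≤ s.card * M := by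
  classical
  set S := ∑ i ∈ s, f i
  set d := s.card
  have hpairs : ∑ k ∈ s, ∑ l ∈ s.erase k, (f k + f l) + 2 • S = (2 * d) • S := by
    have hdiag : 2 • S = ∑ k ∈ s, (f k + f k) := by rw [two_nsmul, ← sum_add_distrib]
    rw [hdiag, ← sum_add_distrib,
      sum_congr rfl fun k hk => sum_erase_add s (fun l => f k + f l) hk]
    simp only [sum_add_distrib, sum_const, ← smul_sum]
    rw [mul_comm, mul_nsmul, two_nsmul]
  have hpairs_le : ‖∑ k ∈ s, ∑ l ∈ s.erase k, (f k + f l)‖ ≤ d * (d - 1) * M := by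
    calc ‖∑ k ∈ s, ∑ l ∈ s.erase k, (f k + f l)‖
        ≤ ∑ k ∈ s, ∑ l ∈ s.erase k, M :=
          norm_sum_le_of_le _ fun k hk => norm_sum_le_of_le _ fun l hl =>
            h k hk l (mem_of_mem_erase hl) (ne_of_mem_erase hl).symm
      _ = d * (d - 1) * M := by
          rw [sum_congr rfl fun k hk => by rw [sum_const, card_erase_of_mem hk], sum_const,
            nsmul_eq_mul, nsmul_eq_mul, Nat.cast_sub (by omega)]
          push_cast; ring
  have hd : (2 : ℝ) ≤ d := by exact_mod_cast hs
  have hcount : (2 * d : ℝ) * ‖S‖ ≤ d * (d - 1) * M + 2 * ‖S‖ := by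
    calc (2 * d : ℝ) * ‖S‖ = ‖(2 * d) • S‖ := by
          rw [RCLike.norm_nsmul ℝ, nsmul_eq_mul]; push_cast; ring
      _ ≤ _ := hpairs ▸ norm_add_le _ _
      _ ≤ _ := by rw [RCLike.norm_nsmul ℝ, nsmul_eq_mul]; push_cast; linarith
  nlinarith

theorem Complex.norm_exp_mul_I_add_exp_mul_I (u v : ℝ) :
    ‖exp (u * I) + exp (v * I)‖ = 2 * |Real.cos ((u - v) / 2)| := by
  have h : exp (u * I) + exp (v * I)
      = exp (((u + v) / 2 : ℝ) * I) * (2 * cos ((u - v) / 2 : ℝ)) := by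
    rw [two_cos, mul_add, ← exp_add, ← exp_add]
    congr 2 <;> push_cast <;> ring
  rw [h, norm_mul, norm_exp_ofReal_mul_I, one_mul, norm_mul, Complex.norm_two, ← ofReal_cos,
    norm_real, Real.norm_eq_abs]

theorem exponential_sum_cosine_bound_general
    (N : ℕ) (j : ℕ) (t : ℝ)
    (D : Finset ℤ)
    (hcard : 2 ≤ D.card)
    (a b : ℤ)
    (hmax : ∀ l ∈ D, ∀ m ∈ D, l ≠ m →
      ‖(Complex.exp (2 * Real.pi * Complex.I * (t / (N : ℝ) ^ j) * (l : ℂ))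
          + Complex.exp (2 * Real.pi * Complex.I * (t / (N : ℝ) ^ j) * (m : ℂ)))‖
        ≤ ‖(Complex.exp (2 * Real.pi * Complex.I * (t / (N : ℝ) ^ j) * (a : ℂ))
          + Complex.exp (2 * Real.pi * Complex.I * (t / (N : ℝ) ^ j) * (b : ℂ)))‖) :
    ‖((1 / (D.card : ℂ)) *
        ∑ k ∈ D, Complex.exp (2 * Real.pi * Complex.I * (t / (N : ℝ) ^ j) * (k : ℂ)))‖
      ≤ |Real.cos (Real.pi * t * |((a : ℝ) - (b : ℝ))| / (N : ℝ) ^ j)| := by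
  have hphase (k : ℤ) : 2 * Real.pi * Complex.I * (t / (N : ℝ) ^ j) * (k : ℂ)
      = ((2 * Real.pi * t / (N : ℝ) ^ j * k : ℝ) : ℂ) * I := by
    push_cast; ring
  have hpair : ‖Complex.exp (2 * Real.pi * Complex.I * (t / (N : ℝ) ^ j) * (a : ℂ))
      + Complex.exp (2 * Real.pi * Complex.I * (t / (N : ℝ) ^ j) * (b : ℂ))‖
      = 2 * |Real.cos (Real.pi * t * |((a : ℝ) - (b : ℝ))| / (N : ℝ) ^ j)| := by
    rw [hphase, hphase, norm_exp_mul_I_add_exp_mul_I]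
    rcases abs_cases ((a : ℝ) - b) with ⟨h, -⟩ | ⟨h, -⟩ <;> rw [h]
    · congr 3; ring
    · rw [← Real.cos_neg]; congr 3; ring
  have hsum := Finset.two_mul_norm_sum_le_card_mul hcard _ hmax
  rw [hpair] at hsum
  have hd : (0 : ℝ) < D.card := by positivity
  rw [norm_mul, norm_div, norm_one, Complex.norm_natCast, div_mul_eq_mul_div, one_mul,
    div_le_iff₀ hd]
  linarith

theorem exponential_sum_cosine_bound
    (N : ℕ) (j : ℕ) (t : ℝ)
    (D : Finset ℤ) (hD : ∀ x ∈ D, 0 ≤ x ∧ x < (N : ℤ))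
    (hcard : 2 ≤ D.card)
    (a b : ℤ) (ha : a ∈ D) (hb : b ∈ D) (hab : a ≠ b)
    (hmax : ∀ l ∈ D, ∀ m ∈ D, l ≠ m →
      ‖(Complex.exp (2 * Real.pi * Complex.I * (t / (N : ℝ) ^ j) * (l : ℂ))
          + Complex.exp (2 * Real.pi * Complex.I * (t / (N : ℝ) ^ j) * (m : ℂ)))‖
        ≤ ‖(Complex.exp (2 * Real.pi * Complex.I * (t / (N : ℝ) ^ j) * (a : ℂ))
          + Complex.exp (2 * Real.pi * Complex.I * (t / (N : ℝ) ^ j) * (b : ℂ)))‖) :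
    ‖((1 / (D.card : ℂ)) *
        ∑ k ∈ D, Complex.exp (2 * Real.pi * Complex.I * (t / (N : ℝ) ^ j) * (k : ℂ)))‖
      ≤ |Real.cos (Real.pi * t * |((a : ℝ) - (b : ℝ))| / (N : ℝ) ^ j)| :=
  exponential_sum_cosine_bound_general N j t D hcard a b hmax
end
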